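/- arXiv:1901.06029 — 7 statements merged into one kernel-verified Lean document; each statement's English description precedes it below -/
import Mathlib

section
/- For integers $k \ge 1$ and $n \ge n' \ge 1$, we have $p(n+1,k) + p(n'-1,k) \ge p(n,k) + p(n',k)$. -/
/-! Take an optimal partition `a + r₁ + ⋯ + r_{k-1} = m` of `m`, with product `a * R`.
Moving one unit onto, resp. off, the part `a` gives partitions of `m + 1` and `m - 1` with
products `(a + 1) * R` and `(a - 1) * R`, which add up to `2 * p m k`; they still have all
parts below the total, since each `rⱼ ≤ m - a` (and if `a = 1` the second product is `0`).
So `p · k` has nonnegative second differences, and summing them telescopes to the claim. -/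

/-- `p n k` : maximum of `∏ q i` over partitions of `n` into `k` nonnegative
parts each strictly less than `n` (so `p 0 0 = 1`). -/
noncomputable def p (n k : ℕ) : ℕ :=
  sSup {m | ∃ q : Fin k → ℕ, (∑ i, q i) = n ∧ (∀ i, q i < n) ∧ m = ∏ i, q i}

theorem add_le_add_succ_pred_of_convex {M : Type*} [AddCommMonoid M] [PartialOrder M]
    [IsOrderedCancelAddMonoid M] {f : ℕ → M}
    (hf : ∀ m, 1 ≤ m → f m + f m ≤ f (m + 1) + f (m - 1)) {n n' : ℕ} (hn' : 1 ≤ n')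
    (hn : n' ≤ n) : f n + f n' ≤ f (n + 1) + f (n' - 1) := by
  induction n, hn using Nat.le_induction with
  | base => exact hf n' hn'
  | succ n hn ih =>
    have h := add_le_add ih (hf (n + 1) (by omega))
    rw [Nat.add_sub_cancel] at h
    refine le_of_add_le_add_left (a := f n + f (n + 1)) ?_
    convert h using 1 <;> abel

theorem p_bddAbove (n k : ℕ) :
    BddAbove {m | ∃ q : Fin k → ℕ, (∑ i, q i) = n ∧ (∀ i, q i < n) ∧ m = ∏ i, q i} := by
  refine ⟨n ^ k, ?_⟩
  rintro _ ⟨q, -, hlt, rfl⟩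
  calc ∏ i, q i ≤ ∏ _i : Fin k, n := Finset.prod_le_prod' fun i _ => (hlt i).le
    _ = n ^ k := by simp

theorem prod_le_p {n k : ℕ} (q : Fin k → ℕ) (hsum : ∑ i, q i = n) (hlt : ∀ i, q i < n) :
    ∏ i, q i ≤ p n k :=
  le_csSup (p_bddAbove n k) ⟨q, hsum, hlt, rfl⟩

theorem exists_prod_eq_p {n k : ℕ} (h : 0 < p n k) :
    ∃ q : Fin k → ℕ, (∑ i, q i) = n ∧ (∀ i, q i < n) ∧ ∏ i, q i = p n k := by
  obtain ⟨q, hsum, hlt, hq⟩ := Nat.sSup_mem (Set.nonempty_iff_ne_empty.mpr fun h' => by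
    rw [p, h'] at h; simp at h) (p_bddAbove n k)
  exact ⟨q, hsum, hlt, hq.symm⟩

theorem mul_prod_le_p {n k : ℕ} (a : ℕ) (r : Fin k → ℕ) (hsum : a + ∑ j, r j = n)
    (ha : a < n) (hr : ∀ j, r j < n) : a * ∏ j, r j ≤ p n (k + 1) := by
  simpa [Fin.prod_univ_succ] using
    prod_le_p (Fin.cons a r : Fin (k + 1) → ℕ) (by simpa [Fin.sum_univ_succ] using hsum)
      (Fin.cases ha hr)

theorem p_add_p_le_p_succ_add_p_pred (k : ℕ) {m : ℕ} (hm : 1 ≤ m) :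
    p m k + p m k ≤ p (m + 1) k + p (m - 1) k := by
  rcases (p m k).eq_zero_or_pos with h0 | hpos
  · simp [h0]
  obtain ⟨q, hsum, hlt, hprod⟩ := exists_prod_eq_p hpos
  cases k with
  | zero => simp at hsum; omega
  | succ k =>
    obtain ⟨a, r, rfl⟩ : ∃ a r, q = Fin.cons a r :=
      ⟨q 0, Fin.tail q, (Fin.cons_self_tail q).symm⟩
    simp only [Fin.sum_univ_succ, Fin.prod_univ_succ, Fin.cons_zero, Fin.cons_succ] at hsum hprod
    have ham : a < m := by simpa using hlt 0
    have ha : 1 ≤ a := Nat.pos_of_ne_zero fun h => by simp [h] at hprod; omega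
    have hr : ∀ j, r j + a ≤ m := fun j => by
      have := Finset.single_le_sum (fun j _ => Nat.zero_le (r j)) (Finset.mem_univ j); omega
    have hup : (a + 1) * ∏ j, r j ≤ p (m + 1) (k + 1) :=
      mul_prod_le_p _ r (by omega) (by omega) fun j => by have := hr j; omega
    have hdown : (a - 1) * ∏ j, r j ≤ p (m - 1) (k + 1) := by
      rcases eq_or_lt_of_le ha with ha1 | ha2
      · simp [← ha1]
      · exact mul_prod_le_p _ r (by omega) (by omega) fun j => by have := hr j; omega
    obtain ⟨b, hb⟩ : ∃ b, a = b + 1 := ⟨a - 1, by omega⟩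
    calc p m (k + 1) + p m (k + 1) = (a + 1) * ∏ j, r j + (a - 1) * ∏ j, r j := by
          rw [← hprod, hb, Nat.add_sub_cancel]; ring
      _ ≤ _ := add_le_add hup hdown

theorem p_convexity_general (k n n' : ℕ) (hn' : 1 ≤ n') (hn : n' ≤ n) :
    p n k + p n' k ≤ p (n + 1) k + p (n' - 1) k :=
  add_le_add_succ_pred_of_convex (fun _ hm => p_add_p_le_p_succ_add_p_pred k hm) hn' hn

theorem p_convexity (k n n' : ℕ) (hk : 1 ≤ k) (hn' : 1 ≤ n') (hn : n' ≤ n) :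
    p n k + p n' k ≤ p (n + 1) k + p (n' - 1) k :=
  p_convexity_general k n n' hn' hn
end

section
/- Let $a, b, k, n$ be positive integers with $k = a + b \ge 2$ and $n \ge \max\{a, b\}$. Then $(1 + a/n)^b (1 - b/n)^a \ge 1 - \max\{a b^2, b a^2\}/n^2$. -/
/-!
Put `x = a / n` and `y = b / n`. If `a ≤ b`, concavity of `u ↦ u ^ (a / b)` (Bernoulli's
inequality with a fractional exponent) gives `(1 + y) ^ a ≤ (1 + x) ^ b`, so the product is at
least `(1 - y ^ 2) ^ a ≥ 1 - a y ^ 2 = 1 - a b ^ 2 / n ^ 2`. If `b ≤ a`, the same argument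
gives `(1 - x) ^ b ≤ (1 - y) ^ a`, and the product is at least
`(1 - x ^ 2) ^ b ≥ 1 - b a ^ 2 / n ^ 2`.
-/

open Real

theorem one_add_pow_le_one_add_div_mul_pow {t : ℝ} (ht : -1 ≤ t) {p q : ℕ} (hpq : p ≤ q) :
    (1 + t) ^ p ≤ (1 + p / q * t) ^ q := by
  rcases Nat.eq_zero_or_pos q with rfl | hq
  · simp [Nat.le_zero.mp hpq]
  have hq' : (0 : ℝ) < q := by exact_mod_cast hq
  have hbase : 0 ≤ 1 + t := by linarith
  have hbern : (1 + t) ^ ((p : ℝ) / q) ≤ 1 + p / q * t :=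
    rpow_one_add_le_one_add_mul_self ht (by positivity)
      ((div_le_one hq').mpr (by exact_mod_cast hpq))
  calc (1 + t) ^ p = ((1 + t) ^ ((p : ℝ) / q)) ^ q := by
        rw [← rpow_natCast _ q, ← rpow_mul hbase, div_mul_cancel₀ _ hq'.ne', rpow_natCast]
    _ ≤ (1 + p / q * t) ^ q := pow_le_pow_left₀ (by positivity) hbern q

theorem one_sub_mul_sq_le_one_add_pow_mul_one_sub_pow {s : ℝ} (hs : s ^ 2 ≤ 2) (m : ℕ) :
    1 - m * s ^ 2 ≤ (1 + s) ^ m * (1 - s) ^ m :=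
  calc 1 - m * s ^ 2 = 1 + m * -s ^ 2 := by ring
    _ ≤ (1 + -s ^ 2) ^ m := one_add_mul_le_pow (by linarith) m
    _ = (1 + s) ^ m * (1 - s) ^ m := by rw [← mul_pow]; ring

theorem one_sub_mul_sq_div_le_of_le_left {a b n : ℕ} (hab : a ≤ b) (hbn : b ≤ n) :
    1 - (a * b ^ 2 : ℝ) / n ^ 2 ≤ (1 + (a : ℝ) / n) ^ b * (1 - (b : ℝ) / n) ^ a := by
  have hy0 : 0 ≤ (b : ℝ) / n := by positivity
  have hy : (b : ℝ) / n ≤ 1 := div_le_one_of_le₀ (by exact_mod_cast hbn) (Nat.cast_nonneg n)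
  have hpow : (1 + (b : ℝ) / n) ^ a ≤ (1 + (a : ℝ) / n) ^ b := by
    have h := one_add_pow_le_one_add_div_mul_pow (t := (b : ℝ) / n) (by linarith) hab
    rcases Nat.eq_zero_or_pos b with rfl | hb
    · simp
    rwa [div_mul_div_cancel₀ (by positivity)] at h
  calc 1 - (a * b ^ 2 : ℝ) / n ^ 2 = 1 - a * ((b : ℝ) / n) ^ 2 := by ring
    _ ≤ (1 + (b : ℝ) / n) ^ a * (1 - (b : ℝ) / n) ^ a :=
        one_sub_mul_sq_le_one_add_pow_mul_one_sub_pow (by nlinarith) a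
    _ ≤ (1 + (a : ℝ) / n) ^ b * (1 - (b : ℝ) / n) ^ a :=
        mul_le_mul_of_nonneg_right hpow (pow_nonneg (by linarith) a)

theorem one_sub_mul_sq_div_le_of_le_right {a b n : ℕ} (hba : b ≤ a) (han : a ≤ n) :
    1 - (b * a ^ 2 : ℝ) / n ^ 2 ≤ (1 + (a : ℝ) / n) ^ b * (1 - (b : ℝ) / n) ^ a := by
  have hx0 : 0 ≤ (a : ℝ) / n := by positivity
  have hx : (a : ℝ) / n ≤ 1 := div_le_one_of_le₀ (by exact_mod_cast han) (Nat.cast_nonneg n)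
  have hpow : (1 - (a : ℝ) / n) ^ b ≤ (1 - (b : ℝ) / n) ^ a := by
    have h := one_add_pow_le_one_add_div_mul_pow (t := -((a : ℝ) / n)) (by linarith) hba
    rcases Nat.eq_zero_or_pos a with rfl | ha
    · simp
    rwa [mul_neg, div_mul_div_cancel₀ (by positivity), ← sub_eq_add_neg, ← sub_eq_add_neg]
      at h
  calc 1 - (b * a ^ 2 : ℝ) / n ^ 2 = 1 - b * ((a : ℝ) / n) ^ 2 := by ring
    _ ≤ (1 + (a : ℝ) / n) ^ b * (1 - (a : ℝ) / n) ^ b :=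
        one_sub_mul_sq_le_one_add_pow_mul_one_sub_pow (by nlinarith) b
    _ ≤ (1 + (a : ℝ) / n) ^ b * (1 - (b : ℝ) / n) ^ a :=
        mul_le_mul_of_nonneg_left hpow (by positivity)

theorem ab_inequality_general (a b n : ℕ) (hna : a ≤ n) (hnb : b ≤ n) :
    1 - (max (a * b ^ 2) (b * a ^ 2) : ℝ) / (n : ℝ) ^ 2 ≤
      (1 + (a : ℝ) / n) ^ b * (1 - (b : ℝ) / n) ^ a := by
  have hab_nonneg : (0 : ℝ) ≤ a * b := by positivity
  rcases le_total a b with hab | hba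
  · have hab' : (a : ℝ) ≤ b := by exact_mod_cast hab
    rw [max_eq_left (by nlinarith)]
    exact one_sub_mul_sq_div_le_of_le_left hab hnb
  · have hba' : (b : ℝ) ≤ a := by exact_mod_cast hba
    rw [max_eq_right (by nlinarith)]
    exact one_sub_mul_sq_div_le_of_le_right hba hna

theorem ab_inequality (a b k n : ℕ) (ha : 1 ≤ a) (hb : 1 ≤ b) (hn : 1 ≤ n)
    (hk : k = a + b) (hk2 : 2 ≤ k) (hna : a ≤ n) (hnb : b ≤ n) :
    1 - (max (a * b ^ 2) (b * a ^ 2) : ℝ) / (n : ℝ) ^ 2 ≤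
      (1 + (a : ℝ) / n) ^ b * (1 - (b : ℝ) / n) ^ a :=
  ab_inequality_general a b n hna hnb
end

section
/- For integers $k \ge 3$ and $n > k(k-1)$, we have $(n/k)^k (1 - e_k(n)) \le p(n,k) \le (n/k)^k$, where $e_k(n) = (4/27)(k^3/n^2)$. -/
open Real

lemma T_bound (A B K N : ℝ) (hA : 0 ≤ A) (hB : 1 ≤ B) (hab : A + B = K)
    (hK : 5 ≤ K) (hN : K^2 - K + 1 ≤ N) :
    -(4/27*(K^3/N^2)) ≤ -(A*B*K/(2*N^2)) - A*B*(A^2-B^2)/(3*N^3)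
        - (A*B^4/(N^3*(N-B)) + A^4*B/(N^3*(N-A))) := by
  have hB0 : (0:ℝ) ≤ B := by linarith
  have hK0 : (0:ℝ) < K := by linarith
  have hBK : B ≤ K := by linarith
  have hAK : A ≤ K := by linarith
  have hN0 : (0:ℝ) < N := by nlinarith
  have hNK : K < N := by nlinarith
  have hNB0 : 0 < N - B := by nlinarith
  have hNA0 : 0 < N - A := by nlinarith
  have hb1 : A*B*K/(2*N^2) ≤ 1/8*(K^3/N^2) := by
    have h : A*B*K ≤ K^3/4 := by
      rw [← hab]
      nlinarith [mul_nonneg (sq_nonneg (A-B)) (show (0:ℝ) ≤ A+B by linarith)]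
    calc A*B*K/(2*N^2) ≤ (K^3/4)/(2*N^2) := by gcongr
    _ = 1/8*(K^3/N^2) := by ring
  have hb2 : A*B*(A^2-B^2)/(3*N^3) ≤ 1/81*(K^3/N^2) := by
    have h2a : A^2*B ≤ 4/27*K^3 := by
      rw [← hab]
      nlinarith [mul_nonneg (sq_nonneg (3*A-2*(A+B))) (show (0:ℝ) ≤ 3*A+(A+B) by linarith)]
    have hx : A*B*(A^2-B^2) ≤ K*(A^2*B) := by
      rw [← hab]
      nlinarith [mul_nonneg (mul_nonneg hA hA) (mul_nonneg hB0 hB0),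
        mul_nonneg hA (mul_nonneg hB0 (mul_nonneg hB0 hB0))]
    have h2b : A*B*(A^2-B^2) ≤ N*(K^3/27) := by
      have hy : K*(A^2*B) ≤ K*(4/27*K^3) := mul_le_mul_of_nonneg_left h2a (le_of_lt hK0)
      have hz : 4*K ≤ N := by nlinarith
      nlinarith [pow_nonneg (le_of_lt hK0) 3]
    calc A*B*(A^2-B^2)/(3*N^3) ≤ (N*(K^3/27))/(3*N^3) := by gcongr
    _ = 1/81*(K^3/N^2) := by field_simp; ring
  have hb3 : A*B^4/(N^3*(N-B)) + A^4*B/(N^3*(N-A)) ≤ 5/768*(K^3/N^2) := by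
    have hd0 : (0:ℝ) < 64/125*K^4 := by positivity
    have e2' : 64/125*K^4 ≤ K*(K-1)^3 := by
      linarith only [mul_nonneg hK0.le (mul_nonneg (show (0:ℝ) ≤ K-5 by linarith)
        (show (0:ℝ) ≤ 61*K^2-70*K+25 by linarith only [sq_nonneg (61*K-35)]))]
    have p1 : K*(K-1) ≤ N := by linarith only [hN]
    have p2B : (K-1)^2 ≤ N - B := by linarith only [hN, hBK]
    have p2A : (K-1)^2 ≤ N - A := by linarith only [hN, hAK]
    have pK1 : (0:ℝ) ≤ K*(K-1) := mul_nonneg hK0.le (by linarith : (0:ℝ) ≤ K-1)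
    have hd1 : 64/125*K^4 ≤ N*(N-B) := by
      have e1' : (K*(K-1))*((K-1)^2) ≤ N*(N-B) :=
        mul_le_mul p1 p2B (sq_nonneg _) hN0.le
      linarith only [e1', e2']
    have hd2 : 64/125*K^4 ≤ N*(N-A) := by
      have e1' : (K*(K-1))*((K-1)^2) ≤ N*(N-A) :=
        mul_le_mul p1 p2A (sq_nonneg _) hN0.le
      linarith only [e1', e2']
    have hnum : A*B^4 + A^4*B ≤ K^5/12 := by
      rw [← hab]
      linarith only [mul_nonneg (show (0:ℝ) ≤ A+B by linarith) (sq_nonneg (A^2-4*A*B+B^2))]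
    have f1 : A*B^4/(N^3*(N-B)) = (A*B^4/(N*(N-B)))/N^2 := by
      rw [div_div]; congr 1; ring
    have f2 : A^4*B/(N^3*(N-A)) = (A^4*B/(N*(N-A)))/N^2 := by
      rw [div_div]; congr 1; ring
    rw [f1, f2, ← add_div]
    have g1 : A*B^4/(N*(N-B)) ≤ A*B^4/(64/125*K^4) := by
      gcongr
    have g2 : A^4*B/(N*(N-A)) ≤ A^4*B/(64/125*K^4) := by
      gcongr
    have g3 : A*B^4/(64/125*K^4) + A^4*B/(64/125*K^4) ≤ 5/768*K^3 := by
      rw [← add_div, div_le_iff₀ hd0]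
      have h25 : (0:ℝ) ≤ K^2 - 25 := by linarith only [sq_nonneg (K-5), hK]
      have : K^5/12 ≤ 5/768*K^3*(64/125*K^4) := by
        linarith only [mul_nonneg (pow_nonneg (le_of_lt hK0) 5) h25]
      linarith
    have hsum : A*B^4/(N*(N-B)) + A^4*B/(N*(N-A)) ≤ 5/768*K^3 := by linarith
    calc (A*B^4/(N*(N-B)) + A^4*B/(N*(N-A)))/N^2 ≤ (5/768*K^3)/N^2 := by gcongr
    _ = 5/768*(K^3/N^2) := by ring
  have hpos : 0 ≤ K^3/N^2 := by positivity
  linarith only [hb1, hb2, hb3, hpos]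

lemma S_bound (A B K N : ℝ) (hA : 0 ≤ A) (hB : 1 ≤ B) (hab : A + B = K)
    (hK : 5 ≤ K) (hN : K^2 - K + 1 ≤ N) :
    -(4/27*(K^3/N^2)) ≤ A * Real.log (1 + B/N) + B * Real.log (1 - A/N) := by
  have hB0 : (0:ℝ) ≤ B := by linarith
  have hK0 : (0:ℝ) < K := by linarith
  have hBK : B ≤ K := by linarith
  have hAK : A ≤ K := by linarith
  have hN0 : (0:ℝ) < N := by nlinarith
  have hNK : K < N := by nlinarith
  have hNB0 : 0 < N - B := by nlinarith
  have hNA0 : 0 < N - A := by nlinarith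
  have lB : (B/N) - (B/N)^2/2 + (B/N)^3/3 - (B/N)^4/(1-B/N) ≤ Real.log (1 + B/N) := by
    have h0 : 0 ≤ B/N := by positivity
    have h1 : B/N < 1 := (div_lt_one hN0).2 (by linarith)
    have h := Real.abs_log_sub_add_sum_range_le (x := -(B/N)) (by rw [abs_neg, abs_of_nonneg h0]; exact h1) 3
    rw [abs_neg, abs_of_nonneg h0] at h
    have h' := abs_le.1 h
    simp [Finset.sum_range_succ] at h'
    nlinarith [h'.1, h'.2]
  have lA : -(A/N) - (A/N)^2/2 - (A/N)^3/3 - (A/N)^4/(1-A/N) ≤ Real.log (1 - A/N) := by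
    have h0 : 0 ≤ A/N := by positivity
    have h1 : A/N < 1 := (div_lt_one hN0).2 (by linarith)
    have h := Real.abs_log_sub_add_sum_range_le (x := A/N) (by rw [abs_of_nonneg h0]; exact h1) 3
    rw [abs_of_nonneg h0] at h
    have h' := abs_le.1 h
    simp [Finset.sum_range_succ] at h'
    nlinarith [h'.1, h'.2]
  have hS : A*((B/N) - (B/N)^2/2 + (B/N)^3/3 - (B/N)^4/(1-B/N))
      + B*(-(A/N) - (A/N)^2/2 - (A/N)^3/3 - (A/N)^4/(1-A/N))
      ≤ A * Real.log (1 + B/N) + B * Real.log (1 - A/N) := by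
    have h1 := mul_le_mul_of_nonneg_left lB hA
    have h2 := mul_le_mul_of_nonneg_left lA hB0
    linarith only [h1, h2]
  refine le_trans ?_ hS
  have e1 : (B/N)^4/(1-B/N) = B^4/(N^3*(N-B)) := by
    rw [div_pow, div_div]
    congr 1
    field_simp
  have e2 : (A/N)^4/(1-A/N) = A^4/(N^3*(N-A)) := by
    rw [div_pow, div_div]
    congr 1
    field_simp
  rw [e1, e2]
  have heq : A*((B/N) - (B/N)^2/2 + (B/N)^3/3 - B^4/(N^3*(N-B)))
      + B*(-(A/N) - (A/N)^2/2 - (A/N)^3/3 - A^4/(N^3*(N-A)))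
      = -(A*B*K/(2*N^2)) - A*B*(A^2-B^2)/(3*N^3)
        - (A*B^4/(N^3*(N-B)) + A^4*B/(N^3*(N-A))) := by
    rw [← hab]; ring
  rw [heq]
  exact T_bound A B K N hA hB hab hK hN

lemma ratio_lb (a b k n : ℕ) (hk : 3 ≤ k) (hab : a + b = k) (hb1 : 1 ≤ b)
    (hn : k*(k-1) < n) :
    1 - 4/27*((k:ℝ)^3/(n:ℝ)^2) ≤ (1 + (b:ℝ)/n)^a * (1 - (a:ℝ)/n)^b := by
  have hk0 : 0 < k := by omega
  have hn0 : 0 < n := by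
    have : k*(k-1) ≥ 6 := by
      have h1 : 3 ≤ k := hk
      calc 6 = 3*2 := by norm_num
      _ ≤ k*(k-1) := Nat.mul_le_mul hk (by omega)
    omega
  have hN0 : (0:ℝ) < n := by exact_mod_cast hn0
  have hNn : (k:ℝ)^2 - k + 1 ≤ n := by
    have h : k*(k-1) + 1 ≤ n := hn
    have h' : ((k*(k-1) + 1 : ℕ) : ℝ) ≤ n := by exact_mod_cast h
    push_cast [Nat.cast_sub (show 1 ≤ k by omega)] at h'
    nlinarith [h']
  have hKpos : (0:ℝ) < k := by exact_mod_cast hk0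
  have hak : a ≤ k - 1 := by omega
  have hK3 : (3:ℝ) ≤ k := by exact_mod_cast hk
  have hkn : (k:ℝ) < n := by nlinarith [hNn, hK3, sq_nonneg ((k:ℝ)-3)]
  have hAN : (a:ℝ) < n := by
    have ha1 : a + 1 ≤ k := by omega
    have ha1' : (a:ℝ) + 1 ≤ k := by exact_mod_cast ha1
    linarith
  have h1A : 0 < 1 - (a:ℝ)/n := by
    rw [sub_pos, div_lt_one hN0]; exact hAN
  have h1B : 0 < 1 + (b:ℝ)/n := by positivity
  by_cases h5 : 5 ≤ k
  · -- analytic branch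
    have hS := S_bound a b k n (by positivity) (by exact_mod_cast hb1)
      (by exact_mod_cast hab) (by exact_mod_cast h5) hNn
    have e1 : (1 + (b:ℝ)/n)^a = Real.exp ((a:ℝ) * Real.log (1 + (b:ℝ)/n)) := by
      rw [← Real.log_pow, Real.exp_log (by positivity)]
    have e2 : (1 - (a:ℝ)/n)^b = Real.exp ((b:ℝ) * Real.log (1 - (a:ℝ)/n)) := by
      rw [← Real.log_pow, Real.exp_log (by positivity)]
    rw [e1, e2, ← Real.exp_add]
    have := Real.add_one_le_exp ((a:ℝ) * Real.log (1 + (b:ℝ)/n) + (b:ℝ) * Real.log (1 - (a:ℝ)/n))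
    linarith [hS, this]
  · -- k = 3 or 4
    have hk34 : k = 3 ∨ k = 4 := by omega
    have hN7 : (7:ℝ) ≤ n := by
      have h7 : 7 ≤ n := by rcases hk34 with h | h <;> subst h <;> omega
      exact_mod_cast h7
    rcases hk34 with h | h <;> subst h
    · -- k = 3
      have ha2 : a ≤ 2 := by omega
      interval_cases a
      · have hb3 : b = 3 := by omega
        subst hb3
        rw [← sub_nonneg]
        push_cast
        have expand : (1 + 3/(n:ℝ))^(0:ℕ) * (1 - 0/(n:ℝ))^(3:ℕ) - (1 - 4/27*((3:ℝ)^3/(n:ℝ)^2))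
            = 4/(n:ℝ)^2 := by
          field_simp
          ring
        rw [expand]
        positivity
      · have hb3 : b = 2 := by omega
        subst hb3
        rw [← sub_nonneg]
        push_cast
        have expand : (1 + 2/(n:ℝ))^(1:ℕ) * (1 - 1/(n:ℝ))^(2:ℕ) - (1 - 4/27*((3:ℝ)^3/(n:ℝ)^2))
            = ((n:ℝ)+2)/(n:ℝ)^3 := by
          field_simp
          ring
        rw [expand]
        positivity
      · have hb3 : b = 1 := by omega
        subst hb3
        rw [← sub_nonneg]
        push_cast
        have expand : (1 + 1/(n:ℝ))^(2:ℕ) * (1 - 2/(n:ℝ))^(1:ℕ) - (1 - 4/27*((3:ℝ)^3/(n:ℝ)^2))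
            = ((n:ℝ)-2)/(n:ℝ)^3 := by
          field_simp
          ring
        rw [expand]
        have h2 : (0:ℝ) ≤ (n:ℝ) - 2 := by linarith
        positivity
    · -- k = 4
      have hN13 : (13:ℝ) ≤ n := by
        have : 13 ≤ n := by omega
        exact_mod_cast this
      have ha3 : a ≤ 3 := by omega
      interval_cases a
      · have hb3 : b = 4 := by omega
        subst hb3
        rw [← sub_nonneg]
        push_cast
        have expand : (1 + 4/(n:ℝ))^(0:ℕ) * (1 - 0/(n:ℝ))^(4:ℕ) - (1 - 4/27*((4:ℝ)^3/(n:ℝ)^2))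
            = 256/(27*(n:ℝ)^2) := by
          field_simp
          ring
        rw [expand]
        positivity
      · have hb3 : b = 3 := by omega
        subst hb3
        rw [← sub_nonneg]
        push_cast
        have expand : (1 + 3/(n:ℝ))^(1:ℕ) * (1 - 1/(n:ℝ))^(3:ℕ) - (1 - 4/27*((4:ℝ)^3/(n:ℝ)^2))
            = (94*(n:ℝ)^2 + 216*n - 81)/(27*(n:ℝ)^4) := by
          field_simp
          ring
        rw [expand]
        have h2 : (0:ℝ) ≤ 94*(n:ℝ)^2 + 216*(n:ℝ) - 81 := by
          have hx : 13*(n:ℝ) ≤ (n:ℝ)*(n:ℝ) := mul_le_mul_of_nonneg_right hN13 (by positivity)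
          linarith only [hx, hN13]
        positivity
      · have hb3 : b = 2 := by omega
        subst hb3
        rw [← sub_nonneg]
        push_cast
        have expand : (1 + 2/(n:ℝ))^(2:ℕ) * (1 - 2/(n:ℝ))^(2:ℕ) - (1 - 4/27*((4:ℝ)^3/(n:ℝ)^2))
            = (40*(n:ℝ)^2 + 432)/(27*(n:ℝ)^4) := by
          field_simp
          ring
        rw [expand]
        positivity
      · have hb3 : b = 1 := by omega
        subst hb3
        rw [← sub_nonneg]
        push_cast
        have expand : (1 + 1/(n:ℝ))^(3:ℕ) * (1 - 3/(n:ℝ))^(1:ℕ) - (1 - 4/27*((4:ℝ)^3/(n:ℝ)^2))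
            = (94*(n:ℝ)^2 - 216*n - 81)/(27*(n:ℝ)^4) := by
          field_simp
          ring
        rw [expand]
        have h2 : (0:ℝ) ≤ 94*(n:ℝ)^2 - 216*(n:ℝ) - 81 := by
          have hx : 13*(n:ℝ) ≤ (n:ℝ)*(n:ℝ) := mul_le_mul_of_nonneg_right hN13 (by positivity)
          linarith only [hx, hN13]
        positivity

theorem p_mem_and_ge (k n : ℕ) (hk : 3 ≤ k) (hn : k * (k - 1) < n) :
    (p n k ∈ {m | ∃ q : Fin k → ℕ, (∑ i, q i) = n ∧ (∀ i, q i < n) ∧ m = ∏ i, q i}) ∧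
    (n/k + 1)^(n % k) * (n/k)^(k - n % k) ≤ p n k := by
  have hk0 : 0 < k := by omega
  have h6 : 6 ≤ k * (k-1) := by
    have h2 : 2 ≤ k - 1 := by omega
    calc 6 = 3 * 2 := rfl
    _ ≤ k * (k-1) := Nat.mul_le_mul hk h2
  have hn7 : 7 ≤ n := lt_of_le_of_lt h6 hn
  set t := n % k with htdef
  set m := n / k with hmdef
  have hmt : k * m + t = n := Nat.div_add_mod n k
  have ht : t < k := Nat.mod_lt _ hk0
  have hmlt : m + 1 < n := by
    have h1 : m ≤ n / 3 := Nat.div_le_div_left hk (by norm_num)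
    have h2 : n / 3 * 3 ≤ n := Nat.div_mul_le_self n 3
    omega
  -- witness
  set q0 : Fin k → ℕ := fun i => if (i : ℕ) < t then m + 1 else m with hq0
  have hsum : (∑ i, q0 i) = n := by
    have e1 : (∑ i, q0 i) = ∑ j ∈ Finset.range k, (if j < t then m + 1 else m) :=
      Fin.sum_univ_eq_sum_range (fun j => if j < t then m + 1 else m) k
    rw [e1, Finset.range_eq_Ico, ← Finset.sum_Ico_consecutive _ (Nat.zero_le t) ht.le]
    rw [Finset.sum_ite_of_true, Finset.sum_ite_of_false]
    · simp [Finset.sum_const, Nat.card_Ico]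
      have htm : t * m ≤ k * m := Nat.mul_le_mul_right m ht.le
      zify [ht.le, htm]
      zify at hmt
      linarith
    · intro i hi
      simp [Finset.mem_Ico] at hi
      omega
    · intro i hi
      simp [Finset.mem_Ico] at hi
      omega
  have hprod : (∏ i, q0 i) = (m+1)^t * m^(k-t) := by
    have e1 : (∏ i, q0 i) = ∏ j ∈ Finset.range k, (if j < t then m + 1 else m) :=
      Fin.prod_univ_eq_prod_range (fun j => if j < t then m + 1 else m) k
    rw [e1, Finset.range_eq_Ico, ← Finset.prod_Ico_consecutive _ (Nat.zero_le t) ht.le]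
    rw [Finset.prod_ite_of_true, Finset.prod_ite_of_false]
    · simp [Finset.prod_const, Nat.card_Ico]
    · intro i hi
      simp [Finset.mem_Ico] at hi
      omega
    · intro i hi
      simp [Finset.mem_Ico] at hi
      omega
  have hlt : ∀ i, q0 i < n := by
    intro i
    simp only [hq0]
    split
    · exact hmlt
    · omega
  have hmem : (m+1)^t * m^(k-t) ∈ {x | ∃ q : Fin k → ℕ, (∑ i, q i) = n ∧ (∀ i, q i < n) ∧ x = ∏ i, q i} :=
    ⟨q0, hsum, hlt, hprod.symm⟩
  have hbdd : BddAbove {x | ∃ q : Fin k → ℕ, (∑ i, q i) = n ∧ (∀ i, q i < n) ∧ x = ∏ i, q i} := by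
    refine ⟨n^k, fun x hx => ?_⟩
    obtain ⟨q, hsq, hlq, rfl⟩ := hx
    calc (∏ i, q i) ≤ ∏ _i : Fin k, n :=
      Finset.prod_le_prod' (fun i _ => (hlq i).le)
    _ = n^k := by simp [Finset.prod_const]
  constructor
  · exact Nat.sSup_mem ⟨_, hmem⟩ hbdd
  · exact le_csSup hbdd hmem

theorem p_bounds (k n : ℕ) (hk : 3 ≤ k) (hn : k * (k - 1) < n) :
    ((n : ℝ) / k) ^ k * (1 - (4 / 27) * ((k : ℝ) ^ 3 / (n : ℝ) ^ 2)) ≤ (p n k : ℝ) ∧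
    (p n k : ℝ) ≤ ((n : ℝ) / k) ^ k := by
  have hk0 : 0 < k := by omega
  have h6 : 6 ≤ k * (k-1) := by
    have h2 : 2 ≤ k - 1 := by omega
    calc 6 = 3 * 2 := rfl
    _ ≤ k * (k-1) := Nat.mul_le_mul hk h2
  have hn7 : 7 ≤ n := lt_of_le_of_lt h6 hn
  have hK0 : (0:ℝ) < k := by exact_mod_cast hk0
  have hN0 : (0:ℝ) < n := by positivity
  obtain ⟨hmem, hge⟩ := p_mem_and_ge k n hk hn
  have ht : n % k < k := Nat.mod_lt _ hk0
  have hmtR : (k:ℝ) * ((n/k : ℕ):ℝ) + ((n % k : ℕ):ℝ) = n := by exact_mod_cast Nat.div_add_mod n k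
  have hbR : ((k - n % k : ℕ):ℝ) = (k:ℝ) - ((n % k : ℕ):ℝ) := by
    rw [Nat.cast_sub ht.le]
  constructor
  · -- lower bound
    have hcast : (((n/k + 1)^(n % k) * (n/k)^(k - n % k) : ℕ) : ℝ) ≤ (p n k : ℝ) := by
      exact_mod_cast hge
    have e1 : ((n/k : ℕ) : ℝ) = ((n:ℝ) - ((n % k : ℕ):ℝ))/k := by
      rw [eq_div_iff (ne_of_gt hK0)]
      linarith
    have e3 : ((n:ℝ) + ((k - n % k : ℕ):ℝ))/k = ((n:ℝ)/k)*(1 + ((k - n % k : ℕ):ℝ)/n) := by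
      field_simp
    have e4 : ((n:ℝ) - ((n % k : ℕ):ℝ))/k = ((n:ℝ)/k)*(1 - ((n % k : ℕ):ℝ)/n) := by
      field_simp
    have ecast : (((n/k + 1)^(n % k) * (n/k)^(k - n % k) : ℕ) : ℝ)
        = ((n:ℝ)/k)^k * ((1 + ((k - n % k : ℕ):ℝ)/n)^(n % k) * (1 - ((n % k : ℕ):ℝ)/n)^(k - n % k)) := by
      push_cast
      rw [e1]
      rw [show ((n:ℝ) - ((n % k : ℕ):ℝ))/k + 1 = ((n:ℝ) + ((k - n % k : ℕ):ℝ))/k from by rw [hbR]; field_simp; ring]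
      rw [e3, e4, mul_pow, mul_pow]
      rw [show (((n:ℝ)/k)^(n % k)) * ((1 + ((k - n % k : ℕ):ℝ)/n)^(n % k)) * ((((n:ℝ)/k)^(k - n % k)) * ((1 - ((n % k : ℕ):ℝ)/n)^(k - n % k)))
          = (((n:ℝ)/k)^(n % k) * ((n:ℝ)/k)^(k - n % k)) * ((1 + ((k - n % k : ℕ):ℝ)/n)^(n % k) * (1 - ((n % k : ℕ):ℝ)/n)^(k - n % k)) from by ring]
      rw [← pow_add]
      congr 2
      omega
    have hr := ratio_lb (n % k) (k - n % k) k n hk (by omega) (by omega) hn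
    have hmul : ((n:ℝ)/k)^k * (1 - 4/27*((k:ℝ)^3/(n:ℝ)^2))
        ≤ ((n:ℝ)/k)^k * ((1 + ((k - n % k : ℕ):ℝ)/n)^(n % k) * (1 - ((n % k : ℕ):ℝ)/n)^(k - n % k)) :=
      mul_le_mul_of_nonneg_left hr (by positivity)
    calc ((n:ℝ)/k)^k * (1 - 4/27*((k:ℝ)^3/(n:ℝ)^2))
        ≤ ((n:ℝ)/k)^k * ((1 + ((k - n % k : ℕ):ℝ)/n)^(n % k) * (1 - ((n % k : ℕ):ℝ)/n)^(k - n % k)) := hmul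
    _ = (((n/k + 1)^(n % k) * (n/k)^(k - n % k) : ℕ) : ℝ) := ecast.symm
    _ ≤ (p n k : ℝ) := hcast
  · -- upper bound
    obtain ⟨q, hsq, hlq, hpq⟩ := hmem
    rw [hpq]
    push_cast
    have hsumr : (∑ i, ((q i : ℕ):ℝ)) = n := by exact_mod_cast hsq
    have step : ∀ i ∈ Finset.univ, ((q i : ℕ):ℝ) ≤ ((n:ℝ)/k) * Real.exp (((q i : ℕ):ℝ)*((k:ℝ)/n) - 1) := by
      intro i _
      have h := Real.add_one_le_exp (((q i : ℕ):ℝ)*((k:ℝ)/n) - 1)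
      have h2 : ((q i : ℕ):ℝ)*((k:ℝ)/n) ≤ Real.exp (((q i : ℕ):ℝ)*((k:ℝ)/n) - 1) := by linarith
      calc ((q i : ℕ):ℝ) = ((n:ℝ)/k) * (((q i : ℕ):ℝ)*((k:ℝ)/n)) := by
            field_simp
          _ ≤ ((n:ℝ)/k) * Real.exp (((q i : ℕ):ℝ)*((k:ℝ)/n) - 1) :=
            mul_le_mul_of_nonneg_left h2 (by positivity)
    calc (∏ i, ((q i : ℕ):ℝ)) ≤ ∏ i, (((n:ℝ)/k) * Real.exp (((q i : ℕ):ℝ)*((k:ℝ)/n) - 1)) :=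
          Finset.prod_le_prod (fun i _ => by positivity) step
    _ = ((n:ℝ)/k)^k * Real.exp (∑ i, (((q i : ℕ):ℝ)*((k:ℝ)/n) - 1)) := by
          rw [Finset.prod_mul_distrib, Finset.prod_const, Real.exp_sum]
          simp
    _ = ((n:ℝ)/k)^k := by
          rw [show (∑ i, (((q i : ℕ):ℝ)*((k:ℝ)/n) - 1)) = (∑ i, ((q i : ℕ):ℝ))*((k:ℝ)/n) - k from by
            rw [Finset.sum_sub_distrib, ← Finset.sum_mul]
            simp]
          rw [hsumr]
          rw [show (n:ℝ)*((k:ℝ)/n) - k = 0 from by field_simp; ring]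
          simp
end

section
/- Define $g_k(s)$ recursively by $g_k(s) = 0$ for $0 \le s < k$, and for $s \ge k \ge 3$, $g_k(s) = \max \{ \sum_{i=1}^k g_k(s_i) + \prod_{i=1}^k s_i \}$ over all partitions $s_1 + \cdots + s_k = s$ with $0 \le s_i < s$ for each $i$. Then for all $n \ge k \ge 3$, the maximum defining $g_k(n)$ is achieved by an equitable partition, i.e. one with $|n_i - n_j| \le 1$ for all $i \ne j$. -/
/-- The Erdős–Hajnal function `g k s`: `g k s = 0` for `s < k` and otherwise the
maximum of `∑ i, g k (s i) + ∏ i, s i` over nontrivial partitions of `s` into `k` parts. -/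
noncomputable def g (k : ℕ) (s : ℕ) : ℕ :=
  Nat.strongRecOn s fun s ih =>
    if s < k then 0
    else sSup {m | ∃ q : Fin k → ℕ, ∃ h : ∀ i, q i < s,
      (∑ i, q i) = s ∧ m = (∑ i, ih (q i) (h i)) + ∏ i, q i}

lemma g_eq (k s : ℕ) : g k s =
    if s < k then 0
    else sSup {m | ∃ q : Fin k → ℕ, ∃ _h : ∀ i, q i < s,
      (∑ i, q i) = s ∧ m = (∑ i, g k (q i)) + ∏ i, q i} := by
  have : ∀ n, g k n = Nat.lt_wfRel.wf.fix
      (fun s (ih : ∀ m, m < s → ℕ) =>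
        if s < k then 0
        else sSup {m | ∃ q : Fin k → ℕ, ∃ h : ∀ i, q i < s,
          (∑ i, q i) = s ∧ m = (∑ i, ih (q i) (h i)) + ∏ i, q i}) n := fun n => rfl
  rw [this, WellFounded.fix_eq]
  simp only [← this]

/-- increment of balanced product: `fi j T = (T/j+1)^(T%j) * (T/j)^(j-1-T%j)` -/
def fi (j T : ℕ) : ℕ := (T / j + 1) ^ (T % j) * (T / j) ^ (j - 1 - T % j)

/-- balanced product of `j` parts summing to `T` -/
def F (j T : ℕ) : ℕ := (T / j + 1) ^ (T % j) * (T / j) ^ (j - T % j)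

lemma F_succ {j : ℕ} (hj : 0 < j) (T : ℕ) : F j (T + 1) = F j T + fi j T := by
  obtain ⟨m, r, hr, rfl⟩ : ∃ m r, r < j ∧ T = j * m + r := by
    exact ⟨T / j, T % j, Nat.mod_lt _ hj, (Nat.div_add_mod T j).symm⟩
  have hdiv : (j * m + r) / j = m := by
    rw [Nat.mul_add_div hj, Nat.div_eq_of_lt hr, Nat.add_zero]
  have hmod : (j * m + r) % j = r := by
    rw [Nat.mul_add_mod, Nat.mod_eq_of_lt hr]
  rcases Nat.lt_or_ge (r + 1) j with h | h
  · have hdiv1 : (j * m + r + 1) / j = m := by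
      rw [Nat.add_assoc, Nat.mul_add_div hj, Nat.div_eq_of_lt h, Nat.add_zero]
    have hmod1 : (j * m + r + 1) % j = r + 1 := by
      rw [Nat.add_assoc, Nat.mul_add_mod, Nat.mod_eq_of_lt h]
    unfold F fi
    rw [hdiv, hmod, hdiv1, hmod1]
    have e1 : j - r = (j - 1 - r) + 1 := by omega
    have e2 : j - (r + 1) = j - 1 - r := by omega
    rw [e1, e2, pow_succ, pow_succ]
    ring
  · have hrj : r = j - 1 := by omega
    have hT1 : j * m + r + 1 = j * (m + 1) := by
      have : j * (m + 1) = j * m + j := by ring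
      omega
    have hdiv1 : (j * m + r + 1) / j = m + 1 := by
      rw [hT1, Nat.mul_div_cancel_left _ hj]
    have hmod1 : (j * m + r + 1) % j = 0 := by
      rw [hT1, Nat.mul_mod_right]
    unfold F fi
    rw [hdiv, hmod, hdiv1, hmod1, hrj]
    have e1 : j - (j - 1) = 1 := by omega
    have e2 : j - 1 - (j - 1) = 0 := by omega
    rw [e1, e2]
    have e3 : (m + 1 + 1) ^ 0 = 1 := rfl
    rw [e3, pow_one, pow_zero, one_mul, mul_one, Nat.sub_zero]
    have : (m + 1) ^ j = (m + 1) ^ (j - 1) * (m + 1) := by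
      rw [← pow_succ]; congr 1; omega
    rw [this]; ring

lemma fi_succ_le {j : ℕ} (hj : 0 < j) (T : ℕ) : fi j T ≤ fi j (T + 1) := by
  obtain ⟨m, r, hr, rfl⟩ : ∃ m r, r < j ∧ T = j * m + r := by
    exact ⟨T / j, T % j, Nat.mod_lt _ hj, (Nat.div_add_mod T j).symm⟩
  have hdiv : (j * m + r) / j = m := by
    rw [Nat.mul_add_div hj, Nat.div_eq_of_lt hr, Nat.add_zero]
  have hmod : (j * m + r) % j = r := by
    rw [Nat.mul_add_mod, Nat.mod_eq_of_lt hr]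
  rcases Nat.lt_or_ge (r + 1) j with h | h
  · have hdiv1 : (j * m + r + 1) / j = m := by
      rw [Nat.add_assoc, Nat.mul_add_div hj, Nat.div_eq_of_lt h, Nat.add_zero]
    have hmod1 : (j * m + r + 1) % j = r + 1 := by
      rw [Nat.add_assoc, Nat.mul_add_mod, Nat.mod_eq_of_lt h]
    unfold fi
    rw [hdiv, hmod, hdiv1, hmod1]
    have e1 : j - 1 - r = (j - 1 - (r + 1)) + 1 := by omega
    rw [e1, pow_succ, pow_succ]
    calc (m + 1) ^ r * ((m:ℕ) ^ (j - 1 - (r + 1)) * m)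
        = ((m + 1) ^ r * m) * m ^ (j - 1 - (r + 1)) := by ring
      _ ≤ ((m + 1) ^ r * (m+1)) * m ^ (j - 1 - (r + 1)) := by
          apply Nat.mul_le_mul_right; apply Nat.mul_le_mul_left; omega
      _ = (m + 1) ^ (r+1) * m ^ (j - 1 - (r + 1)) := by rw [pow_succ]
  · have hrj : r = j - 1 := by omega
    have hT1 : j * m + r + 1 = j * (m + 1) := by
      have : j * (m + 1) = j * m + j := by ring
      omega
    have hdiv1 : (j * m + r + 1) / j = m + 1 := by
      rw [hT1, Nat.mul_div_cancel_left _ hj]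
    have hmod1 : (j * m + r + 1) % j = 0 := by
      rw [hT1, Nat.mul_mod_right]
    unfold fi
    rw [hdiv, hmod, hdiv1, hmod1, hrj]
    have e2 : j - 1 - (j - 1) = 0 := by omega
    rw [e2, pow_zero, mul_one, pow_zero, one_mul, Nat.sub_zero]

lemma fi_mono {j : ℕ} (hj : 0 < j) : Monotone (fi j) :=
  monotone_nat_of_le_succ (fi_succ_le hj)

lemma F_shift {j : ℕ} (hj : 0 < j) :
    ∀ c S W, c ≤ S → S ≤ W → F j S + F j W ≤ F j (S - c) + F j (W + c) := by
  intro c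
  induction c with
  | zero => intro S W _ _; simp
  | succ c ih =>
    intro S W hc hSW
    have hS1 : 1 ≤ S := by omega
    have h1 : F j S + F j W ≤ F j (S - 1) + F j (W + 1) := by
      have e : S = (S - 1) + 1 := by omega
      rw [F_succ hj W]
      calc F j S + F j W = F j ((S-1)+1) + F j W := by rw [← e]
        _ = F j (S-1) + fi j (S-1) + F j W := by rw [F_succ hj]
        _ ≤ F j (S-1) + fi j W + F j W := by
            have := fi_mono hj (show S - 1 ≤ W by omega); omega
        _ = F j (S-1) + (F j W + fi j W) := by ring
    have h2 := ih (S - 1) (W + 1) (by omega) (by omega)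
    have e1 : S - 1 - c = S - (c+1) := by omega
    have e2 : W + 1 + c = W + (c+1) := by omega
    rw [e1, e2] at h2
    omega

lemma F_rearr {j : ℕ} (hj : 0 < j) {a b a' b' : ℕ} (hsum : a + b = a' + b')
    (h1 : a' ≤ a) (h2 : a' ≤ b) (h3 : a ≤ b') (h4 : b ≤ b') :
    F j a + F j b ≤ F j a' + F j b' := by
  rcases le_total a b with h | h
  · have := F_shift hj (a - a') a b (by omega) h
    have e1 : a - (a - a') = a' := by omega
    have e2 : b + (a - a') = b' := by omega
    rw [e1, e2] at this; omega
  · have := F_shift hj (b - a') b a (by omega) h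
    have e1 : b - (b - a') = a' := by omega
    have e2 : a + (b - a') = b' := by omega
    rw [e1, e2] at this; omega
/-- equitable partition of `c` into `j` parts -/
def eqp (j c : ℕ) : Fin j → ℕ := fun i => if (i : ℕ) < c % j then c / j + 1 else c / j

lemma filter_card_fin (j r : ℕ) (hr : r ≤ j) :
    (Finset.univ.filter (fun i : Fin j => (i : ℕ) < r)).card = r := by
  have : (Finset.univ.filter (fun i : Fin j => (i : ℕ) < r)) =
      (Finset.range r).attachFin (fun m hm => lt_of_lt_of_le (Finset.mem_range.mp hm) hr) := by
    ext i
    simp [Finset.mem_attachFin]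
  rw [this, Finset.card_attachFin, Finset.card_range]

lemma eqp_sum {j : ℕ} (hj : 0 < j) (c : ℕ) : ∑ i, eqp j c i = c := by
  unfold eqp
  rw [Finset.sum_ite, Finset.sum_const, Finset.sum_const,
    filter_card_fin j (c % j) (le_of_lt (Nat.mod_lt _ hj))]
  have hcard : (Finset.univ.filter (fun i : Fin j => ¬ (i : ℕ) < c % j)).card = j - c % j := by
    have := Finset.card_filter_add_card_filter_not (s := (Finset.univ : Finset (Fin j)))
      (p := fun i : Fin j => (i : ℕ) < c % j)
    simp only [Finset.card_univ, Fintype.card_fin] at this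
    rw [filter_card_fin j (c % j) (le_of_lt (Nat.mod_lt _ hj))] at this
    omega
  rw [hcard]
  simp only [smul_eq_mul]
  have h1 := Nat.div_add_mod c j
  have h2 : c % j < j := Nat.mod_lt _ hj
  have e : (j - c % j) * (c / j) = j * (c/j) - (c % j) * (c/j) := by
    rw [Nat.sub_mul]
  have e2 : (c % j) * (c / j + 1) = (c % j) * (c/j) + c % j := by ring
  have e3 : (c % j) * (c/j) ≤ j * (c/j) := Nat.mul_le_mul_right _ (by omega)
  omega

lemma eqp_prod {j : ℕ} (hj : 0 < j) (c : ℕ) : ∏ i, eqp j c i = F j c := by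
  unfold eqp F
  rw [Finset.prod_ite, Finset.prod_const, Finset.prod_const,
    filter_card_fin j (c % j) (le_of_lt (Nat.mod_lt _ hj))]
  congr 1
  have := Finset.card_filter_add_card_filter_not (s := (Finset.univ : Finset (Fin j)))
    (p := fun i : Fin j => (i : ℕ) < c % j)
  simp only [Finset.card_univ, Fintype.card_fin] at this
  rw [filter_card_fin j (c % j) (le_of_lt (Nat.mod_lt _ hj))] at this
  congr 1
  omega

lemma eqp_cap {j c B : ℕ} (hj : 0 < j) (hc : c ≤ j * B) (i : Fin j) : eqp j c i ≤ B := by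
  unfold eqp
  split
  · rename_i h
    have hdiv : c / j < B := by
      by_contra hd
      push_neg at hd
      have : j * B ≤ j * (c / j) := Nat.mul_le_mul_left _ hd
      have h2 : j * (c / j) ≤ c := Nat.mul_div_le c j
      have : c = j * B := by omega
      have : c % j = 0 := by rw [this]; exact Nat.mul_mod_right _ _
      omega
    omega
  · have h2 : j * (c / j) ≤ c := Nat.mul_div_le c j
    by_contra hd
    push_neg at hd
    have : j * B < j * (c / j) := by
      exact Nat.mul_lt_mul_of_le_of_lt (le_refl j) hd hj
    omega

lemma eqp_lb {j c : ℕ} (i : Fin j) : c / j ≤ eqp j c i := by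
  unfold eqp; split <;> omega

lemma eqp_ub {j c : ℕ} (i : Fin j) : eqp j c i ≤ c / j + 1 := by
  unfold eqp; split <;> omega

/-- discrete AM-GM : product of a finite family is at most the balanced product. -/
lemma amgm : ∀ (μ : ℕ) {ι : Type} [DecidableEq ι] (s : Finset ι) (t : ι → ℕ),
    0 < s.card → (∑ i ∈ s, t i * t i) ≤ μ →
    ∏ i ∈ s, t i ≤ F s.card (∑ i ∈ s, t i) := by
  intro μ
  induction μ using Nat.strong_induction_on with
  | _ μ IH =>
    intro ι _ s t hcard hμ
    by_cases hbal : ∃ i ∈ s, ∃ j ∈ s, t j + 2 ≤ t i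
    · obtain ⟨i, hi, j, hj, hij⟩ := hbal
      have hne : i ≠ j := by rintro rfl; omega
      set t' : ι → ℕ := Function.update (Function.update t i (t i - 1)) j (t j + 1) with ht'
      have ht'i : t' i = t i - 1 := by
        rw [ht', Function.update_of_ne hne, Function.update_self]
      have ht'j : t' j = t j + 1 := by rw [ht', Function.update_self]
      have ht'other : ∀ l, l ≠ i → l ≠ j → t' l = t l := by
        intro l hli hlj
        rw [ht', Function.update_of_ne hlj, Function.update_of_ne hli]
      -- decompose sums and products over s via erase i then erase j
      have hjmem : j ∈ s.erase i := Finset.mem_erase.mpr ⟨fun h => hne h.symm, hj⟩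
      have hdec : ∀ f : ι → ℕ, ∑ l ∈ s, f l = f i + f j + ∑ l ∈ (s.erase i).erase j, f l := by
        intro f
        rw [← Finset.add_sum_erase _ f hi, ← Finset.add_sum_erase _ f hjmem]
        ring
      have hdecp : ∀ f : ι → ℕ, ∏ l ∈ s, f l = f i * f j * ∏ l ∈ (s.erase i).erase j, f l := by
        intro f
        rw [← Finset.mul_prod_erase _ f hi, ← Finset.mul_prod_erase _ f hjmem]
        ring
      have hrest_eq : ∀ f g : ι → ℕ, (∀ l, l ≠ i → l ≠ j → f l = g l) →
          ∑ l ∈ (s.erase i).erase j, f l = ∑ l ∈ (s.erase i).erase j, g l ∧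
          ∏ l ∈ (s.erase i).erase j, f l = ∏ l ∈ (s.erase i).erase j, g l := by
        intro f g h
        have hmem : ∀ l ∈ (s.erase i).erase j, f l = g l := by
          intro l hl
          simp only [Finset.mem_erase] at hl
          exact h l (fun e => hl.2.1 e) (fun e => hl.1 e)
        exact ⟨Finset.sum_congr rfl hmem, Finset.prod_congr rfl hmem⟩
      obtain ⟨hrs, hrp⟩ := hrest_eq t' t ht'other
      have hsum_eq : ∑ l ∈ s, t' l = ∑ l ∈ s, t l := by
        rw [hdec t', hdec t, hrs, ht'i, ht'j]; omega
      have hsq_lt : ∑ l ∈ s, t' l * t' l < ∑ l ∈ s, t l * t l := by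
        rw [hdec (fun l => t' l * t' l), hdec (fun l => t l * t l)]
        have := (hrest_eq (fun l => t' l * t' l) (fun l => t l * t l)
          (fun l h1 h2 => by simp only [ht'other l h1 h2])).1
        rw [this, ht'i, ht'j]
        have hti : 2 ≤ t i := by omega
        obtain ⟨a, ha⟩ : ∃ a, t i = a + 1 := ⟨t i - 1, by omega⟩
        rw [ha]
        simp only [Nat.add_sub_cancel]
        have hba : t j < a := by omega
        nlinarith
      have hprod_le : ∏ l ∈ s, t l ≤ ∏ l ∈ s, t' l := by
        rw [hdecp t', hdecp t, hrp, ht'i, ht'j]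
        apply Nat.mul_le_mul_right
        obtain ⟨a, ha⟩ : ∃ a, t i = a + 1 := ⟨t i - 1, by omega⟩
        rw [ha]
        simp only [Nat.add_sub_cancel]
        nlinarith
      calc ∏ l ∈ s, t l ≤ ∏ l ∈ s, t' l := hprod_le
        _ ≤ F s.card (∑ l ∈ s, t' l) := IH _ (by omega) s t' hcard (le_refl _)
        _ = F s.card (∑ l ∈ s, t l) := by rw [hsum_eq]
    · push_neg at hbal
      -- balanced case
      have hsne : s.Nonempty := Finset.card_pos.mp hcard
      obtain ⟨i₀, hi₀, hmin⟩ := s.exists_min_image t hsne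
      set u := t i₀ with hu
      have hub : ∀ i ∈ s, t i ≤ u + 1 := by
        intro i hi
        have := hbal i hi i₀ hi₀
        omega
      set c := (s.filter (fun i => t i = u + 1)).card with hc
      have hcomp : ∀ i ∈ s.filter (fun i => ¬ t i = u + 1), t i = u := by
        intro i hi
        simp only [Finset.mem_filter] at hi
        have h1 := hmin i hi.1
        have h2 := hub i hi.1
        omega
      have hcompcard : (s.filter (fun i => ¬ t i = u + 1)).card = s.card - c := by
        have := Finset.card_filter_add_card_filter_not (s := s)
          (p := fun i => t i = u + 1)
        omega
      have hclt : c < s.card := by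
        have hi₀mem : i₀ ∈ s.filter (fun i => ¬ t i = u + 1) := by
          simp only [Finset.mem_filter]
          exact ⟨hi₀, by omega⟩
        have h1 : 0 < (s.filter (fun i => ¬ t i = u + 1)).card :=
          Finset.card_pos.mpr ⟨i₀, hi₀mem⟩
        have := Finset.card_filter_add_card_filter_not (s := s)
          (p := fun i => t i = u + 1)
        omega
      have hsum : ∑ i ∈ s, t i = s.card * u + c := by
        rw [← Finset.sum_filter_add_sum_filter_not s (fun i => t i = u + 1)]
        rw [Finset.sum_congr rfl (fun i hi => (Finset.mem_filter.mp hi).2),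
          Finset.sum_congr rfl hcomp]
        rw [Finset.sum_const, Finset.sum_const, hcompcard]
        simp only [smul_eq_mul, ← hc]
        have : (s.card - c) * u = s.card * u - c * u := by rw [Nat.sub_mul]
        have h3 : c * u ≤ s.card * u := Nat.mul_le_mul_right _ (by omega)
        have e2 : c * (u+1) = c * u + c := by ring
        omega
      have hprod : ∏ i ∈ s, t i = (u + 1) ^ c * u ^ (s.card - c) := by
        rw [← Finset.prod_filter_mul_prod_filter_not s (fun i => t i = u + 1)]
        rw [Finset.prod_congr rfl (fun i hi => (Finset.mem_filter.mp hi).2),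
          Finset.prod_congr rfl hcomp]
        rw [Finset.prod_const, Finset.prod_const, hcompcard]
      have hdiv : (∑ i ∈ s, t i) / s.card = u := by
        rw [hsum, Nat.mul_add_div hcard, Nat.div_eq_of_lt hclt, Nat.add_zero]
      have hmod : (∑ i ∈ s, t i) % s.card = c := by
        rw [hsum, Nat.mul_add_mod, Nat.mod_eq_of_lt hclt]
      rw [hprod]
      unfold F
      rw [hdiv, hmod]
/-- increment of the Erdős–Hajnal function (to be proven) -/
def D (k x : ℕ) : ℕ := ∑ i ∈ Finset.range x, fi k (x / k ^ i)

/-- partial sums of D; will be shown equal to g -/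
def G (k n : ℕ) : ℕ := ∑ i ∈ Finset.range n, D k i

lemma G_succ (k n : ℕ) : G k (n + 1) = G k n + D k n := Finset.sum_range_succ _ _

lemma fi_zero {k : ℕ} (hk : 2 ≤ k) : fi k 0 = 0 := by
  unfold fi
  rw [Nat.zero_div, Nat.zero_mod, pow_zero, one_mul]
  rw [Nat.sub_zero, zero_pow (by omega)]

lemma fi_small {k x : ℕ} (hk : 2 ≤ k) (hx : x + 1 < k) : fi k x = 0 := by
  unfold fi
  rw [Nat.div_eq_of_lt (by omega), Nat.mod_eq_of_lt (by omega)]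
  simp only [Nat.zero_add, one_pow, one_mul]
  exact zero_pow (by omega)

lemma D_zero (k : ℕ) : D k 0 = 0 := rfl

lemma D_small {k x : ℕ} (hk : 2 ≤ k) (hx : x + 1 < k) : D k x = 0 := by
  unfold D
  apply Finset.sum_eq_zero
  intro i _
  have h1 : x / k ^ i ≤ x := Nat.div_le_self _ _
  exact fi_small hk (by omega)

lemma D_rec {k x : ℕ} (hk : 2 ≤ k) (hx : 0 < x) : D k x = D k (x / k) + fi k x := by
  obtain ⟨n, rfl⟩ : ∃ n, x = n + 1 := ⟨x - 1, by omega⟩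
  unfold D
  rw [Finset.sum_range_succ']
  have e0 : (n + 1) / k ^ 0 = n + 1 := by rw [pow_zero, Nat.div_one]
  rw [e0]
  have e1 : ∀ i, (n + 1) / k ^ (i + 1) = ((n + 1) / k) / k ^ i := by
    intro i
    rw [Nat.div_div_eq_div_mul, ← pow_succ']
  simp only [e1]
  congr 1
  apply (Finset.sum_subset _ _).symm
  · rw [Finset.range_subset_range]
    have := Nat.div_lt_self hx (show 1 < k by omega)
    omega
  · intro i _ hi
    rw [Finset.mem_range, not_lt] at hi
    have h2 : (n + 1) / k < k ^ i := by
      calc (n + 1) / k ≤ i := hi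
        _ < 2 ^ i := Nat.lt_two_pow_self
        _ ≤ k ^ i := Nat.pow_le_pow_left hk _
    rw [Nat.div_eq_of_lt h2]
    exact fi_zero hk

lemma D_km1 {k : ℕ} (hk : 2 ≤ k) : D k (k - 1) = 1 := by
  rw [D_rec hk (by omega), Nat.div_eq_of_lt (by omega), D_zero, Nat.zero_add]
  unfold fi
  rw [Nat.div_eq_of_lt (by omega), Nat.mod_eq_of_lt (by omega)]
  simp only [Nat.zero_add, one_pow, one_mul, Nat.sub_self, pow_zero]

lemma G_small {k n : ℕ} (hk : 2 ≤ k) (hn : n < k) : G k n = 0 := by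
  unfold G
  apply Finset.sum_eq_zero
  intro i hi
  rw [Finset.mem_range] at hi
  exact D_small hk (by omega)

lemma G_kk {k : ℕ} (hk : 2 ≤ k) : G k k = 1 := by
  obtain ⟨n, hn⟩ : ∃ n, k = n + 1 := ⟨k - 1, by omega⟩
  rw [hn, G_succ]
  rw [← hn]
  rw [G_small hk (by omega)]
  have : k - 1 = n := by omega
  rw [← this, D_km1 hk]

lemma fi_eq_F {k x : ℕ} (hk : 2 ≤ k) : fi k x = F (k - 1) (x - x / k) := by
  have hk1 : 0 < k - 1 := by omega
  have hdm : k * (x / k) + x % k = x := Nat.div_add_mod x k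
  have hr : x % k < k := Nat.mod_lt _ (by omega)
  set m := x / k with hm
  set r := x % k with hrr
  have e : (k - 1) * m + m = k * m := by
    have h1 : k - 1 + 1 = k := by omega
    calc (k-1)*m + m = ((k-1)+1)*m := by ring
      _ = k * m := by rw [h1]
  rcases Nat.lt_or_ge r (k - 1) with h | h
  · have hxm : x - m = (k - 1) * m + r := by omega
    have hdiv : ((k-1) * m + r) / (k-1) = m := by
      rw [Nat.mul_add_div hk1, Nat.div_eq_of_lt h, Nat.add_zero]
    have hmod : ((k-1) * m + r) % (k-1) = r := by
      rw [Nat.mul_add_mod, Nat.mod_eq_of_lt h]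
    unfold fi F
    rw [← hm, ← hrr, hxm, hdiv, hmod]
  · have hreq : r = k - 1 := by omega
    have e2 : (k - 1) * (m + 1) = (k-1) * m + (k-1) := by ring
    have hxm : x - m = (k - 1) * (m + 1) := by omega
    have hdiv : ((k-1) * (m+1)) / (k-1) = m + 1 := Nat.mul_div_cancel_left _ hk1
    have hmod : ((k-1) * (m+1)) % (k-1) = 0 := Nat.mul_mod_right _ _
    unfold fi F
    rw [← hm, ← hrr, hxm, hdiv, hmod, hreq]
    rw [Nat.sub_self, pow_zero, mul_one, pow_zero, one_mul, Nat.sub_zero]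
/-- Key inequality: adding `k-1` parts, each at most `y+1`, to `y`
increases `D` by at least the product of the parts. -/
lemma zeta {k : ℕ} (hk : 3 ≤ k) :
    ∀ y, ∀ {ι : Type} [DecidableEq ι] (s : Finset ι) (t : ι → ℕ),
    s.card = k - 1 → (∀ i ∈ s, t i ≤ y + 1) →
    D k y + ∏ i ∈ s, t i ≤ D k (y + ∑ i ∈ s, t i) := by
  have hk2 : 2 ≤ k := by omega
  have hk1 : 0 < k - 1 := by omega
  intro y
  induction y using Nat.strong_induction_on with
  | _ y IH =>
    intro ι _ s t hcard hcap
    rcases Nat.eq_zero_or_pos y with rfl | hy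
    · -- y = 0 : parts are 0 or 1
      have hP : ∏ i ∈ s, t i ≤ 1 := Finset.prod_le_one (fun _ _ => Nat.zero_le _)
        (fun i hi => by have := hcap i hi; omega)
      rcases Nat.lt_or_ge (∏ i ∈ s, t i) 1 with h | h
      · have h0 : ∏ i ∈ s, t i = 0 := by omega
        rw [h0, D_zero]
        simp
      · have h1 : ∏ i ∈ s, t i = 1 := by omega
        have hone : ∀ i ∈ s, t i = 1 := by
          intro i hi
          have hle := hcap i hi
          rcases Nat.eq_zero_or_pos (t i) with h0 | hpos
          · exfalso
            have : ∏ i ∈ s, t i = 0 := Finset.prod_eq_zero hi h0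
            omega
          · omega
        have hsum : ∑ i ∈ s, t i = k - 1 := by
          rw [Finset.sum_congr rfl hone, Finset.sum_const, hcard, smul_eq_mul, Nat.mul_one]
        rw [h1, hsum, D_zero, Nat.zero_add, Nat.zero_add, D_km1 hk2]
    · -- y ≥ 1
      set S := ∑ i ∈ s, t i with hSdef
      set x := y + S with hxdef
      set m := y / k with hmdef
      set m1 := x / k with hm1def
      have hx1 : 1 ≤ x := by omega
      have hS : S ≤ (k-1) * (y+1) := by
        rw [hSdef, ← hcard]
        calc ∑ i ∈ s, t i ≤ ∑ _i ∈ s, (y+1) := Finset.sum_le_sum hcap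
          _ = s.card * (y+1) := by rw [Finset.sum_const, smul_eq_mul]
      -- basic div facts
      have hdm_y : k * m + y % k = y := Nat.div_add_mod y k
      have hmod_y : y % k < k := Nat.mod_lt _ (by omega)
      have hdm_x : k * m1 + x % k = x := Nat.div_add_mod x k
      have hmod_x : x % k < k := Nat.mod_lt _ (by omega)
      have hm_lt : m < y := Nat.div_lt_self hy (by omega)
      have e1 : (k-1) * (y+1) + (y+1) = k * (y+1) := by
        have h1 : k - 1 + 1 = k := by omega
        calc (k-1)*(y+1) + (y+1) = ((k-1)+1)*(y+1) := by ring
          _ = k * (y+1) := by rw [h1]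
      have e2 : k * (y + 1) = k * y + k := by ring
      have hm1y : m1 ≤ y := by
        have hlt : x < (y+1) * k := by
          have : (y+1) * k = k * (y+1) := Nat.mul_comm _ _
          omega
        have := (Nat.div_lt_iff_lt_mul (show 0 < k by omega)).mpr hlt
        omega
      have hmm1 : m ≤ m1 := Nat.div_le_div_right (by omega)
      have hdiffS : m1 ≤ m + S := by
        have h1 : y + S ≤ y + k * S := by
          have : S ≤ k * S := Nat.le_mul_of_pos_left _ (by omega)
          omega
        have h2 : (y + k * S) / k = m + S := by
          rw [Nat.add_mul_div_left _ _ (show 0 < k by omega)]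
        have h3 : x / k ≤ (y + k * S) / k := Nat.div_le_div_right h1
        omega
      have e3 : (k-1) * (m+1) + (m+1) = k * (m+1) := by
        have h1 : k - 1 + 1 = k := by omega
        calc (k-1)*(m+1) + (m+1) = ((k-1)+1)*(m+1) := by ring
          _ = k * (m+1) := by rw [h1]
      have e4 : k * (m+1) = k * m + k := by ring
      have hc_le : m1 - m ≤ (k-1) * (m+1) := by omega
      -- the balanced redistribution at scale m
      set c := m1 - m with hcdef
      set t' : Fin (k-1) → ℕ := eqp (k-1) c with ht'def
      have hcap' : ∀ i ∈ (Finset.univ : Finset (Fin (k-1))), t' i ≤ m + 1 :=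
        fun i _ => eqp_cap hk1 hc_le i
      have hcard' : (Finset.univ : Finset (Fin (k-1))).card = k - 1 := by
        rw [Finset.card_univ, Fintype.card_fin]
      have hsum' : ∑ i, t' i = c := eqp_sum hk1 c
      have hIH := IH m hm_lt Finset.univ t' hcard' hcap'
      rw [hsum'] at hIH
      have hmc : m + c = m1 := by omega
      rw [hmc] at hIH
      -- AM-GM and rearrangement
      have hAM : ∏ i ∈ s, t i ≤ F (k-1) S := by
        have := amgm (∑ i ∈ s, t i * t i) s t (by omega) (le_refl _)
        rwa [hcard] at this
      have hre : F (k-1) S + F (k-1) (y - m) ≤ F (k-1) c + F (k-1) (x - m1) :=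
        F_rearr hk1 (by omega) (by omega) (by omega) (by omega) (by omega)
      have hprod' : ∏ i, t' i = F (k-1) c := eqp_prod hk1 c
      have hfy : fi k y = F (k-1) (y - m) := fi_eq_F hk2
      have hfx : fi k x = F (k-1) (x - m1) := fi_eq_F hk2
      -- assemble
      have hDy : D k y = D k m + fi k y := D_rec hk2 hy
      have hDx : D k x = D k m1 + fi k x := D_rec hk2 (by omega)
      rw [hprod'] at hIH
      rw [hDy, hDx, hfy, hfx]
      omega
lemma G_zero (k : ℕ) : G k 0 = 0 := rfl

lemma F_zero {k : ℕ} (hk : 1 ≤ k) : F k 0 = 0 := by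
  unfold F
  rw [Nat.zero_div, Nat.zero_mod, pow_zero, one_mul, Nat.sub_zero, zero_pow (by omega)]

/-- the equitable identity : the equitable partition achieves `G`. -/
lemma Eid {k : ℕ} (hk : 2 ≤ k) :
    ∀ n, (n % k) * G k (n / k + 1) + (k - n % k) * G k (n / k) + F k n = G k n := by
  intro n
  induction n with
  | zero =>
    rw [Nat.zero_mod, Nat.zero_div, F_zero (by omega), G_zero, Nat.zero_mul]
    simp
  | succ n ihn =>
    rcases Nat.eq_zero_or_pos n with rfl | hn
    · -- n + 1 = 1
      have h1 : 1 % k = 1 := Nat.mod_eq_of_lt (by omega)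
      have h2 : 1 / k = 0 := Nat.div_eq_of_lt (by omega)
      rw [h1, h2]
      have hG1 : G k 1 = 0 := G_small hk (by omega)
      have hG0 : G k 0 = 0 := rfl
      have hF1 : F k 1 = 0 := by
        unfold F
        rw [h1, h2, Nat.zero_add, one_pow, one_mul, zero_pow (by omega)]
      rw [hG1, hG0, hF1]
      simp
    · obtain ⟨m, r, hr, hnm⟩ : ∃ m r, r < k ∧ n = k * m + r :=
        ⟨n / k, n % k, Nat.mod_lt _ (by omega), (Nat.div_add_mod n k).symm⟩
      have hdiv : n / k = m := by
        rw [hnm, Nat.mul_add_div (by omega), Nat.div_eq_of_lt hr, Nat.add_zero]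
      have hmod : n % k = r := by
        rw [hnm, Nat.mul_add_mod, Nat.mod_eq_of_lt hr]
      have hF : F k (n+1) = F k n + fi k n := F_succ (by omega) n
      have hD : D k n = D k m + fi k n := by
        rw [D_rec hk hn, hdiv]
      have hG1 : G k (m+1) = G k m + D k m := G_succ k m
      rcases Nat.lt_or_ge (r + 1) k with h | h
      · have hdiv1 : (n+1) / k = m := by
          rw [hnm, Nat.add_assoc, Nat.mul_add_div (by omega), Nat.div_eq_of_lt h, Nat.add_zero]
        have hmod1 : (n+1) % k = r + 1 := by
          rw [hnm, Nat.add_assoc, Nat.mul_add_mod, Nat.mod_eq_of_lt h]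
        rw [hdiv, hmod] at ihn
        rw [hdiv1, hmod1, hF, G_succ k n, ← ihn, hD, hG1]
        obtain ⟨d, hd⟩ : ∃ d, k = r + 1 + d := ⟨k - (r+1), by omega⟩
        have h1 : k - (r+1) = d := by omega
        have h2 : k - r = d + 1 := by omega
        rw [h1, h2]
        ring
      · have hrk : r = k - 1 := by omega
        have hT1 : n + 1 = k * (m + 1) := by
          have : k * (m+1) = k * m + k := by ring
          omega
        have hdiv1 : (n+1) / k = m + 1 := by
          rw [hT1, Nat.mul_div_cancel_left _ (by omega)]
        have hmod1 : (n+1) % k = 0 := by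
          rw [hT1, Nat.mul_mod_right]
        rw [hdiv, hmod] at ihn
        rw [hdiv1, hmod1, hF, G_succ k n, ← ihn, hD, hG1]
        have h1 : k - r = 1 := by omega
        have h2 : k - 0 = k := by omega
        rw [h1, h2]
        obtain ⟨d, hd⟩ : ∃ d, k = d + 1 := ⟨k - 1, by omega⟩
        rw [hd]
        have h3 : r = d := by omega
        rw [h3]
        ring

/-- every nontrivial partition gives value at most `G`. -/
lemma KEY {k : ℕ} (hk : 3 ≤ k) :
    ∀ n (q : Fin k → ℕ), (∑ i, q i) = n → (∀ i, q i < n) →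
    (∑ i, G k (q i)) + ∏ i, q i ≤ G k n := by
  have hk2 : 2 ≤ k := by omega
  intro n
  induction n using Nat.strong_induction_on with
  | _ n IH =>
    intro q hsum hlt
    rcases Nat.eq_zero_or_pos n with rfl | hn
    · exact absurd (hlt ⟨0, by omega⟩) (by omega)
    have hGsum0 : n ≤ k → ∑ i, G k (q i) = 0 := by
      intro hnk
      apply Finset.sum_eq_zero
      intro i _
      exact G_small hk2 (by have := hlt i; omega)
    rcases Nat.lt_or_ge n k with hnk | hnk
    · -- n < k : some part is zero
      have hzero : ∃ i, q i = 0 := by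
        by_contra hz
        push_neg at hz
        have : ∑ i, (1:ℕ) ≤ ∑ i, q i :=
          Finset.sum_le_sum (fun i _ => by have := hz i; omega)
        simp only [Finset.sum_const, Finset.card_univ, Fintype.card_fin, smul_eq_mul,
          Nat.mul_one] at this
        omega
      obtain ⟨i, hi⟩ := hzero
      rw [hGsum0 (by omega), Finset.prod_eq_zero (Finset.mem_univ i) hi]
      exact Nat.zero_le _
    rcases Nat.eq_or_lt_of_le hnk with hnk' | hnk'
    · -- n = k
      have hprod : ∏ i, q i ≤ 1 := by
        by_cases hz : ∃ i, q i = 0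
        · obtain ⟨i, hi⟩ := hz
          rw [Finset.prod_eq_zero (Finset.mem_univ i) hi]
          omega
        · push_neg at hz
          have hone : ∀ i, q i = 1 := by
            intro i
            by_contra hne
            have h2 : 2 ≤ q i := by have := hz i; omega
            have h3 : ∑ j ∈ Finset.univ.erase i, (1:ℕ) ≤ ∑ j ∈ Finset.univ.erase i, q j :=
              Finset.sum_le_sum (fun j _ => by have := hz j; omega)
            rw [Finset.sum_const, smul_eq_mul, Nat.mul_one, Finset.card_erase_of_mem
              (Finset.mem_univ i), Finset.card_univ, Fintype.card_fin] at h3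
            have h4 : q i + ∑ j ∈ Finset.univ.erase i, q j = ∑ j, q j :=
              Finset.add_sum_erase _ _ (Finset.mem_univ i)
            omega
          rw [Finset.prod_congr rfl (fun i _ => hone i), Finset.prod_const_one]
      rw [hGsum0 (by omega), ← hnk', G_kk hk2, Nat.zero_add]
      exact hprod
    · -- n > k : the inductive step
      have hne : (Finset.univ : Finset (Fin k)).Nonempty := ⟨⟨0, by omega⟩, Finset.mem_univ _⟩
      obtain ⟨i₀, -, hmax⟩ := Finset.exists_max_image Finset.univ q hne
      have hmax' : ∀ i, q i ≤ q i₀ := fun i => hmax i (Finset.mem_univ i)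
      set a := q i₀ with hadef
      have ha2 : 2 ≤ a := by
        by_contra hcon
        push_neg at hcon
        have : ∑ i, q i ≤ ∑ i, (1:ℕ) :=
          Finset.sum_le_sum (fun i _ => by have := hmax' i; omega)
        simp only [Finset.sum_const, Finset.card_univ, Fintype.card_fin, smul_eq_mul,
          Nat.mul_one] at this
        omega
      set q' := Function.update q i₀ (a - 1) with hq'def
      have hq'i₀ : q' i₀ = a - 1 := Function.update_self _ _ _
      have hq'other : ∀ i, i ≠ i₀ → q' i = q i := fun i h => Function.update_of_ne h _ _
      -- sums and products over erase
      have hsum_er : a + ∑ i ∈ Finset.univ.erase i₀, q i = n := by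
        rw [← hsum]
        exact Finset.add_sum_erase _ _ (Finset.mem_univ i₀)
      set R := ∏ i ∈ Finset.univ.erase i₀, q i with hRdef
      have hprod_er : ∏ i, q i = a * R := by
        rw [hRdef, ← Finset.mul_prod_erase _ _ (Finset.mem_univ i₀)]
      have her_eq_sum : ∑ i ∈ Finset.univ.erase i₀, q' i = ∑ i ∈ Finset.univ.erase i₀, q i :=
        Finset.sum_congr rfl (fun i hi => hq'other i (Finset.mem_erase.mp hi).1)
      have her_eq_prod : ∏ i ∈ Finset.univ.erase i₀, q' i = R :=
        Finset.prod_congr rfl (fun i hi => hq'other i (Finset.mem_erase.mp hi).1)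
      have hsum' : ∑ i, q' i = n - 1 := by
        have h1 : q' i₀ + ∑ i ∈ Finset.univ.erase i₀, q' i = ∑ i, q' i :=
          Finset.add_sum_erase _ _ (Finset.mem_univ i₀)
        rw [hq'i₀, her_eq_sum] at h1
        omega
      have hprod' : ∏ i, q' i = (a - 1) * R := by
        rw [← Finset.mul_prod_erase _ _ (Finset.mem_univ i₀), hq'i₀, her_eq_prod]
      have hlt' : ∀ i, q' i < n - 1 := by
        intro i
        by_cases hii : i = i₀
        · rw [hii, hq'i₀]
          have := hlt i₀
          omega
        · rw [hq'other i hii]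
          have h1 : q i ≤ a := hmax' i
          have h2 : q i ≤ ∑ j ∈ Finset.univ.erase i₀, q j :=
            Finset.single_le_sum (fun j _ => Nat.zero_le _)
              (Finset.mem_erase.mpr ⟨hii, Finset.mem_univ i⟩)
          omega
      have hIH := IH (n-1) (by omega) q' hsum' hlt'
      -- sum of G values
      have hGsum : ∑ i, G k (q i) = (∑ i, G k (q' i)) + D k (a - 1) := by
        have h1 : G k (q i₀) + ∑ i ∈ Finset.univ.erase i₀, G k (q i) = ∑ i, G k (q i) :=
          Finset.add_sum_erase Finset.univ (fun i => G k (q i)) (Finset.mem_univ i₀)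
        have h2 : G k (q' i₀) + ∑ i ∈ Finset.univ.erase i₀, G k (q' i) = ∑ i, G k (q' i) :=
          Finset.add_sum_erase Finset.univ (fun i => G k (q' i)) (Finset.mem_univ i₀)
        rw [hq'i₀] at h2
        have h3 : ∑ i ∈ Finset.univ.erase i₀, G k (q' i) =
            ∑ i ∈ Finset.univ.erase i₀, G k (q i) :=
          Finset.sum_congr rfl (fun i hi => by rw [hq'other i (Finset.mem_erase.mp hi).1])
        have h4 : G k (q i₀) = G k (a-1) + D k (a-1) := by
          have := G_succ k (a-1)
          have e : a - 1 + 1 = a := by omega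
          rwa [e] at this
        omega
      -- zeta application
      have hzeta : D k (a-1) + R ≤ D k (n-1) := by
        have hcard : (Finset.univ.erase i₀).card = k - 1 := by
          rw [Finset.card_erase_of_mem (Finset.mem_univ i₀), Finset.card_univ,
            Fintype.card_fin]
        have hcap : ∀ i ∈ Finset.univ.erase i₀, q i ≤ (a-1) + 1 := by
          intro i _
          have := hmax' i
          omega
        have := zeta hk (a-1) (Finset.univ.erase i₀) q hcard hcap
        have e : a - 1 + ∑ i ∈ Finset.univ.erase i₀, q i = n - 1 := by omega
        rwa [e] at this
      have haR : a * R = (a-1) * R + R := by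
        obtain ⟨b, hb⟩ : ∃ b, a = b + 1 := ⟨a - 1, by omega⟩
        rw [hb]
        have : b + 1 - 1 = b := by omega
        rw [this]
        ring
      have hGn : G k n = G k (n-1) + D k (n-1) := by
        have := G_succ k (n-1)
        have e : n - 1 + 1 = n := by omega
        rwa [e] at this
      rw [hGsum, hprod_er, haR, hGn]
      omega
lemma eqp_comp (f : ℕ → ℕ) {j : ℕ} (hj : 0 < j) (c : ℕ) :
    ∑ i, f (eqp j c i) = (c % j) * f (c / j + 1) + (j - c % j) * f (c / j) := by
  unfold eqp
  simp only [apply_ite f]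
  rw [Finset.sum_ite, Finset.sum_const, Finset.sum_const,
    filter_card_fin j (c % j) (le_of_lt (Nat.mod_lt _ hj))]
  have hcard : (Finset.univ.filter (fun i : Fin j => ¬ (i : ℕ) < c % j)).card = j - c % j := by
    have := Finset.card_filter_add_card_filter_not (s := (Finset.univ : Finset (Fin j)))
      (p := fun i : Fin j => (i : ℕ) < c % j)
    simp only [Finset.card_univ, Fintype.card_fin] at this
    rw [filter_card_fin j (c % j) (le_of_lt (Nat.mod_lt _ hj))] at this
    omega
  rw [hcard]
  simp [smul_eq_mul]

lemma G_eqp_val {k : ℕ} (hk : 3 ≤ k) (n : ℕ) :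
    G k n = (∑ i, G k (eqp k n i)) + ∏ i, eqp k n i := by
  rw [eqp_comp (G k) (show 0 < k by omega), eqp_prod (show 0 < k by omega)]
  exact (Eid (by omega) n).symm

lemma eqp_lt_self {k n : ℕ} (hk : 3 ≤ k) (hn : k ≤ n) (i : Fin k) : eqp k n i < n := by
  have h1 : 3 * (n - 1) ≤ k * (n - 1) := Nat.mul_le_mul_right _ hk
  have h2 : n ≤ k * (n - 1) := by omega
  have := eqp_cap (show 0 < k by omega) h2 i
  omega

lemma g_set_bddAbove (k s : ℕ) :
    BddAbove {m | ∃ q : Fin k → ℕ, ∃ _h : ∀ i, q i < s,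
      (∑ i, q i) = s ∧ m = (∑ i, g k (q i)) + ∏ i, q i} := by
  apply Set.Finite.bddAbove
  have hfin : ({q : Fin k → ℕ | ∀ i, q i < s}).Finite := by
    have : {q : Fin k → ℕ | ∀ i, q i < s} ⊆ Set.pi Set.univ (fun _ => Set.Iio s) := by
      intro q hq
      intro i _
      exact hq i
    exact Set.Finite.subset (Set.Finite.pi (fun _ => Set.finite_Iio s)) this
  apply Set.Finite.subset (Set.Finite.image (fun q => (∑ i, g k (q i)) + ∏ i, q i) hfin)
  rintro m ⟨q, hq, _, rfl⟩
  exact ⟨q, hq, rfl⟩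

lemma g_eq_G {k : ℕ} (hk : 3 ≤ k) : ∀ n, g k n = G k n := by
  intro n
  induction n using Nat.strong_induction_on with
  | _ n IH =>
    rw [g_eq]
    by_cases hnk : n < k
    · rw [if_pos hnk, G_small (by omega) hnk]
    · rw [if_neg hnk]
      push_neg at hnk
      have hmem : G k n ∈ {m | ∃ q : Fin k → ℕ, ∃ _h : ∀ i, q i < n,
          (∑ i, q i) = n ∧ m = (∑ i, g k (q i)) + ∏ i, q i} := by
        refine ⟨eqp k n, fun i => eqp_lt_self hk hnk i,
          eqp_sum (show 0 < k by omega) n, ?_⟩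
        have h1 : ∑ i, g k (eqp k n i) = ∑ i, G k (eqp k n i) :=
          Finset.sum_congr rfl (fun i _ => IH _ (eqp_lt_self hk hnk i))
        rw [h1]
        exact G_eqp_val hk n
      have hub : ∀ m ∈ {m | ∃ q : Fin k → ℕ, ∃ _h : ∀ i, q i < n,
          (∑ i, q i) = n ∧ m = (∑ i, g k (q i)) + ∏ i, q i}, m ≤ G k n := by
        rintro m ⟨q, hq, hsum, rfl⟩
        have h1 : ∑ i, g k (q i) = ∑ i, G k (q i) :=
          Finset.sum_congr rfl (fun i _ => IH _ (hq i))
        rw [h1]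
        exact KEY hk n q hsum hq
      exact le_antisymm (csSup_le (Set.nonempty_of_mem hmem) hub)
        (le_csSup (g_set_bddAbove k n) hmem)

theorem g_equitable (k n : ℕ) (hk : 3 ≤ k) (hn : k ≤ n) :
    ∃ q : Fin k → ℕ, (∑ i, q i) = n ∧ (∀ i, q i < n) ∧
      (∀ i j, q i ≤ q j + 1) ∧
      g k n = (∑ i, g k (q i)) + ∏ i, q i := by
  refine ⟨eqp k n, eqp_sum (show 0 < k by omega) n, fun i => eqp_lt_self hk hn i,
    fun i j => le_trans (eqp_ub i) (by have := eqp_lb (c := n) j; omega), ?_⟩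
  have h1 : ∑ i, g k (eqp k n i) = ∑ i, G k (eqp k n i) :=
    Finset.sum_congr rfl (fun i _ => g_eq_G hk _)
  rw [h1, g_eq_G hk n]
  exact G_eqp_val hk n
end

section
/- For integers $k \ge 3$ and $n \le k(k-1)$ with $n \ge k+1$, we have $g_k(n-1) + 1 + p(n-k, k-1) \le g_k(n)$. -/
open Finset

def balProd (j t : ℕ) : ℕ := (t / j + 1) ^ (t % j) * (t / j) ^ (j - t % j)

-- Raising a smallest part of the balanced partition of `m` by one adds the product of the others.
def balInc (k m : ℕ) : ℕ := (m / k + 1) ^ (m % k) * (m / k) ^ (k - 1 - m % k)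

lemma exists_eq_mul_add {k : ℕ} (hk : 0 < k) (m : ℕ) : ∃ a r, r < k ∧ m = k * a + r :=
  ⟨m / k, m % k, Nat.mod_lt m hk, (Nat.div_add_mod m k).symm⟩

lemma balProd_mul_add {j a r : ℕ} (hr : r < j) :
    balProd j (j * a + r) = (a + 1) ^ r * a ^ (j - r) := by
  have hj : 0 < j := by omega
  rw [balProd, Nat.mul_add_div hj, Nat.mul_add_mod, Nat.div_eq_of_lt hr, Nat.mod_eq_of_lt hr,
    add_zero]

lemma balInc_mul_add {k a r : ℕ} (hr : r < k) :
    balInc k (k * a + r) = (a + 1) ^ r * a ^ (k - 1 - r) := by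
  have hk : 0 < k := by omega
  rw [balInc, Nat.mul_add_div hk, Nat.mul_add_mod, Nat.div_eq_of_lt hr, Nat.mod_eq_of_lt hr,
    add_zero]

lemma balProd_eq_zero_of_lt {j t : ℕ} (h : t < j) : balProd j t = 0 := by
  simpa [Nat.sub_ne_zero_of_lt h] using balProd_mul_add (a := 0) h

lemma mul_add_succ_eq_of_succ_eq {k a r : ℕ} (h : r + 1 = k) :
    k * a + r + 1 = k * (a + 1) + 0 := by
  rw [mul_add, mul_one, add_zero, add_assoc, h]

lemma balProd_succ {k : ℕ} (hk : 0 < k) (m : ℕ) :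
    balProd k (m + 1) = balProd k m + balInc k m := by
  obtain ⟨a, r, hr, rfl⟩ := exists_eq_mul_add hk m
  rw [balProd_mul_add hr, balInc_mul_add hr]
  by_cases hr1 : r + 1 < k
  · rw [add_assoc, balProd_mul_add hr1, show k - r = k - 1 - r + 1 by omega,
      show k - (r + 1) = k - 1 - r by omega]
    ring
  · obtain rfl : k = r + 1 := by omega
    rw [mul_add_succ_eq_of_succ_eq rfl, balProd_mul_add hk]
    simp only [Nat.add_sub_cancel_left, Nat.add_sub_cancel, Nat.sub_self, Nat.sub_zero]
    ring

lemma prod_eq_balProd_of_le_add_one {ι : Type*} (t : Finset ι) (f : ι → ℕ)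
    (h : ∀ i ∈ t, ∀ j ∈ t, f i ≤ f j + 1) :
    ∏ i ∈ t, f i = balProd #t (∑ i ∈ t, f i) := by
  rcases t.eq_empty_or_nonempty with rfl | ht
  · simp [balProd]
  obtain ⟨i₀, hi₀, hmin⟩ := t.exists_min_image f ht
  set a := f i₀
  set u := t.filter (fun i => f i = a + 1)
  set v := t.filter (fun i => ¬ f i = a + 1)
  have hv : ∀ i ∈ v, f i = a := by
    intro i hi
    rw [mem_filter] at hi
    have := hmin i hi.1
    have := h i hi.1 i₀ hi₀
    omega
  have hu : #u < #t := card_lt_card (filter_ssubset.mpr ⟨i₀, hi₀, by omega⟩)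
  have hcard : #u + #v = #t := card_filter_add_card_filter_not _
  have hsum : ∑ i ∈ t, f i = #t * a + #u := by
    rw [← sum_filter_add_sum_filter_not t (fun i => f i = a + 1),
      sum_const_nat (fun i hi => (mem_filter.mp hi).2), sum_const_nat hv, ← hcard]
    ring
  rw [← prod_filter_mul_prod_filter_not t (fun i => f i = a + 1),
    prod_eq_pow_card (fun i hi => (mem_filter.mp hi).2), prod_eq_pow_card hv, hsum,
    balProd_mul_add hu, show #v = #t - #u by omega]

lemma exists_sum_eq_sum_sq_lt_prod_le {ι : Type*} [DecidableEq ι] {t : Finset ι} {f : ι → ℕ}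
    {i j : ι} (hi : i ∈ t) (hj : j ∈ t) (hij : f j + 2 ≤ f i) :
    ∃ f' : ι → ℕ, ∑ x ∈ t, f' x = ∑ x ∈ t, f x ∧
      ∑ x ∈ t, f' x ^ 2 < ∑ x ∈ t, f x ^ 2 ∧ ∏ x ∈ t, f x ≤ ∏ x ∈ t, f' x := by
  have hne : j ≠ i := by rintro rfl; omega
  have hj' : j ∈ t.erase i := mem_erase.mpr ⟨hne, hj⟩
  set f' := Function.update (Function.update f i (f i - 1)) j (f j + 1)
  have hfi : f' i = f i - 1 := by simp [f', hne.symm]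
  have hfj : f' j = f j + 1 := by simp [f']
  have hrest : ∀ x ∈ (t.erase i).erase j, f' x = f x := by
    intro x hx
    obtain ⟨hxj, hxi, -⟩ := by simpa using hx
    simp [f', hxj, hxi]
  have split : ∀ φ : ι → ℕ, t.sum φ = φ i + φ j + ((t.erase i).erase j).sum φ := by
    intro φ
    rw [← add_sum_erase _ φ hi, ← add_sum_erase _ φ hj', add_assoc]
  have splitProd : ∀ φ : ι → ℕ,
      t.prod φ = φ i * φ j * ((t.erase i).erase j).prod φ := by
    intro φ
    rw [← mul_prod_erase _ φ hi, ← mul_prod_erase _ φ hj', mul_assoc]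
  refine ⟨f', ?_, ?_, ?_⟩
  · rw [split f', split f, sum_congr rfl hrest, hfi, hfj]
    omega
  · rw [split (fun x => f' x ^ 2), split (fun x => f x ^ 2),
      sum_congr rfl (fun x hx => by rw [hrest x hx])]
    simp only [hfi, hfj]
    obtain ⟨e, he⟩ : ∃ e, f i = f j + 2 + e := ⟨f i - (f j + 2), by omega⟩
    rw [he, show f j + 2 + e - 1 = f j + 1 + e by omega]
    nlinarith
  · rw [splitProd f', splitProd f, prod_congr rfl hrest, hfi, hfj]
    obtain ⟨e, he⟩ : ∃ e, f i = f j + 2 + e := ⟨f i - (f j + 2), by omega⟩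
    rw [he, show f j + 2 + e - 1 = f j + 1 + e by omega]
    exact Nat.mul_le_mul_right _ (by nlinarith)

theorem prod_le_balProd {ι : Type*} (t : Finset ι) (f : ι → ℕ) :
    ∏ i ∈ t, f i ≤ balProd #t (∑ i ∈ t, f i) := by
  classical
  induction hN : ∑ i ∈ t, f i ^ 2 using Nat.strong_induction_on generalizing f with
  | _ N ih =>
    by_cases hflat : ∀ i ∈ t, ∀ j ∈ t, f i ≤ f j + 1
    · exact (prod_eq_balProd_of_le_add_one t f hflat).le
    push Not at hflat
    obtain ⟨i, hi, j, hj, hij⟩ := hflat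
    obtain ⟨f', hsum, hsq, hprod⟩ := exists_sum_eq_sum_sq_lt_prod_le hi hj hij
    calc ∏ x ∈ t, f x ≤ ∏ x ∈ t, f' x := hprod
      _ ≤ balProd #t (∑ x ∈ t, f x) := hsum ▸ ih _ (hN ▸ hsq) f' rfl

lemma exists_sum_eq_prod_eq_balProd {j : ℕ} (hj : 0 < j) (t : ℕ) :
    ∃ q : Fin j → ℕ,
      ∑ i, q i = t ∧ (∀ i, q i ≤ t / j + 1) ∧ ∏ i, q i = balProd j t := by
  set q : Fin j → ℕ := fun i => t / j + if (i : ℕ) < t % j then 1 else 0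
  have hsum : ∑ i, q i = t := by
    rw [sum_add_distrib, sum_const, sum_boole, Fin.card_filter_val_lt, card_univ,
      Fintype.card_fin, smul_eq_mul, min_eq_right (Nat.mod_lt t hj).le, Nat.cast_id,
      Nat.div_add_mod]
  have hq : ∀ i, t / j ≤ q i ∧ q i ≤ t / j + 1 := fun i => by simp only [q]; split <;> omega
  refine ⟨q, hsum, fun i => (hq i).2, ?_⟩
  rw [prod_eq_balProd_of_le_add_one univ q (fun i _ i' _ => by have := hq i; have := hq i'; omega),
    card_univ, Fintype.card_fin, hsum]

lemma balInc_mul_add_add_pow_le {k a r : ℕ} (hr : r + 2 ≤ k) :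
    balInc k (k * a + r) + a ^ (k - 2) ≤ balInc k (k * a + r + 1) := by
  have hsplit : a ^ (k - 2) = a ^ r * a ^ (k - 2 - r) := by rw [← pow_add]; congr 1; omega
  rw [add_assoc, balInc_mul_add (by omega), balInc_mul_add (by omega), hsplit,
    show k - 1 - r = k - 2 - r + 1 by omega, show k - 1 - (r + 1) = k - 2 - r by omega,
    pow_succ, pow_succ]
  have : a ^ r ≤ (a + 1) ^ r := Nat.pow_le_pow_left (by omega) r
  nlinarith [Nat.zero_le (a ^ (k - 2 - r))]

lemma balInc_le_succ (k m : ℕ) : balInc k m ≤ balInc k (m + 1) := by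
  rcases Nat.eq_zero_or_pos k with rfl | hk
  · simp [balInc]
  obtain ⟨a, r, hr, rfl⟩ := exists_eq_mul_add hk m
  by_cases hr1 : r + 2 ≤ k
  · exact le_of_add_le_left (balInc_mul_add_add_pow_le hr1)
  · rw [mul_add_succ_eq_of_succ_eq (by omega), balInc_mul_add hk, balInc_mul_add hr,
      show k - 1 - r = 0 by omega, show k - 1 - 0 = r by omega]
    simp

lemma balInc_monotone (k : ℕ) : Monotone (balInc k) :=
  monotone_nat_of_le_succ (balInc_le_succ k)

lemma pow_mul_add_le_succ_pow_mul (x n : ℕ) : x ^ n * (x + n) ≤ (x + 1) ^ n * x := by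
  induction n with
  | zero => simp
  | succ n ih =>
    calc x ^ (n + 1) * (x + (n + 1)) ≤ x ^ n * (x + n) * (x + 1) := by
          rw [pow_succ]; nlinarith [Nat.zero_le (x ^ n)]
      _ ≤ (x + 1) ^ n * x * (x + 1) := Nat.mul_le_mul_right _ ih
      _ = (x + 1) ^ (n + 1) * x := by ring

lemma two_mul_pow_mul_pow_le {a r e : ℕ} (h : a + 1 ≤ r + e) :
    2 * ((a + 1) ^ r * a ^ e) ≤ (a + 2) ^ r * (a + 1) ^ e := by
  rcases Nat.eq_zero_or_pos a with rfl | ha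
  · rcases Nat.eq_zero_or_pos e with rfl | he
    · simpa using Nat.pow_le_pow_right (n := 2) two_pos (show 1 ≤ r by omega)
    · simp [he.ne']
  have h₁ := pow_mul_add_le_succ_pow_mul (a + 1) r
  have h₂ := pow_mul_add_le_succ_pow_mul a e
  have hcoef : 2 * ((a + 1) * a) ≤ (a + 1 + r) * (a + e) := by nlinarith
  have key :
      2 * ((a + 1) ^ r * a ^ e) * ((a + 1) * a) ≤ (a + 2) ^ r * (a + 1) ^ e * ((a + 1) * a) :=
    calc 2 * ((a + 1) ^ r * a ^ e) * ((a + 1) * a)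
        ≤ (a + 1) ^ r * a ^ e * ((a + 1 + r) * (a + e)) := by
          nlinarith [Nat.zero_le ((a + 1) ^ r * a ^ e)]
      _ = ((a + 1) ^ r * (a + 1 + r)) * (a ^ e * (a + e)) := by ring
      _ ≤ ((a + 2) ^ r * (a + 1)) * ((a + 1) ^ e * a) := Nat.mul_le_mul h₁ h₂
      _ = (a + 2) ^ r * (a + 1) ^ e * ((a + 1) * a) := by ring
  exact Nat.le_of_mul_le_mul_right key (by positivity)

lemma two_mul_balInc_le_balInc_add_self {k m : ℕ} (h : m / k + 3 ≤ k) :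
    2 * balInc k m ≤ balInc k (m + k) := by
  have hk : 0 < k := Nat.pos_of_ne_zero (by rintro rfl; simp at h)
  obtain ⟨a, r, hr, rfl⟩ := exists_eq_mul_add hk m
  have ha : a = (k * a + r) / k := by
    rw [Nat.mul_add_div hk, Nat.div_eq_of_lt hr, add_zero]
  rw [← ha] at h
  rw [show k * a + r + k = k * (a + 1) + r by ring, balInc_mul_add hr, balInc_mul_add hr]
  exact two_mul_pow_mul_pow_le (by omega)

lemma balInc_add_balInc_le {k x y z : ℕ} (hx : x + k ≤ z) (hy : y + k ≤ z)
    (hz : z < k * (k - 1)) : balInc k x + balInc k y ≤ balInc k z := by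
  have hk : 2 ≤ k := by rcases k with _ | _ | k <;> simp_all
  have hkk : k * (k - 1) = (k - 2) * k + k := by
    obtain ⟨j, rfl⟩ : ∃ j, k = j + 2 := ⟨k - 2, by omega⟩
    rw [Nat.add_sub_cancel, show j + 2 - 1 = j + 1 by omega]; ring
  have hw : max x y / k + 3 ≤ k := by
    have := (Nat.div_lt_iff_lt_mul (by omega)).mpr (show max x y < (k - 2) * k by omega)
    omega
  calc balInc k x + balInc k y ≤ 2 * balInc k (max x y) := by
        have := balInc_monotone k (le_max_left x y)
        have := balInc_monotone k (le_max_right x y)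
        omega
    _ ≤ balInc k (max x y + k) := two_mul_balInc_le_balInc_add_self hw
    _ ≤ balInc k z := balInc_monotone k (by omega)

lemma balInc_mul_add_lt_succ {k a r : ℕ} (ha : 0 < a) (hr : r + 2 ≤ k) :
    balInc k (k * a + r) < balInc k (k * a + r + 1) :=
  Nat.lt_of_lt_of_le (Nat.lt_add_of_pos_right (Nat.pow_pos ha)) (balInc_mul_add_add_pow_le hr)

lemma balInc_lt_balInc_add_pred {k x : ℕ} (hk : 3 ≤ k) (hx : k - 1 ≤ x) :
    balInc k x < balInc k (x + (k - 1)) := by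
  obtain ⟨a, r, hr, rfl⟩ := exists_eq_mul_add (show 0 < k by omega) x
  by_cases hr1 : r + 1 = k
  · calc balInc k (k * a + r) ≤ balInc k (k * (a + 1) + 0) :=
          balInc_monotone k (by rw [← mul_add_succ_eq_of_succ_eq hr1]; omega)
      _ < balInc k (k * (a + 1) + 0 + 1) := balInc_mul_add_lt_succ (by omega) (by omega)
      _ ≤ balInc k (k * a + r + (k - 1)) :=
          balInc_monotone k (by rw [← mul_add_succ_eq_of_succ_eq hr1]; omega)
  · have ha : 0 < a := Nat.pos_of_ne_zero (by rintro rfl; omega)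
    exact (balInc_mul_add_lt_succ ha (by omega)).trans_le (balInc_monotone k (by omega))

lemma balInc_add_balInc_mul_add_le {k c d x : ℕ} (hc : 0 < c) (hck : c + 2 ≤ k)
    (hd : d + 2 ≤ k) (hx : x + 1 ≤ k + c) :
    balInc k x + balInc k (k * c + d) ≤ balInc k (k * c + d + 1) := by
  have hsmall : balInc k x ≤ 2 ^ (c - 1) := by
    calc balInc k x ≤ balInc k (k * 1 + (c - 1)) := balInc_monotone k (by omega)
      _ = 2 ^ (c - 1) := by rw [balInc_mul_add (by omega)]; simp
  have hpow : 2 ^ (c - 1) ≤ c ^ (k - 2) := by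
    rcases Nat.lt_or_ge c 2 with hc1 | hc2
    · obtain rfl : c = 1 := by omega
      simp
    · calc 2 ^ (c - 1) ≤ c ^ (c - 1) := Nat.pow_le_pow_left hc2 _
        _ ≤ c ^ (k - 2) := Nat.pow_le_pow_right hc (by omega)
  have := balInc_mul_add_add_pow_le (a := c) hd
  omega

lemma balInc_pred_add_balProd_le {k b s : ℕ} (hk : 3 ≤ k) (hb : k ≤ b) (hbs : b ≤ s)
    (hs : s ≤ k * (k - 1)) : balInc k (b - 1) + balProd (k - 1) (s - b) ≤ balInc k (s - 1) := by
  obtain ⟨c, d, hd, hv⟩ := exists_eq_mul_add (k := k - 1) (by omega) (s - b)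
  -- One more part `c` turns the balanced `(k - 1)`-partition of `s - b` into that of `k c + d`.
  have hbal : balProd (k - 1) (s - b) = balInc k (k * c + d) := by
    rw [hv, balProd_mul_add hd, balInc_mul_add (by omega)]
  have hkc : k * c = (k - 1) * c + c := by
    rw [← Nat.succ_mul, show (k - 1).succ = k by omega]
  rcases Nat.eq_zero_or_pos c with rfl | hc
  · rw [balProd_eq_zero_of_lt (by omega), add_zero]
    exact balInc_monotone k (by omega)
  have hck : c + 2 ≤ k := by
    by_contra! h
    have : (k - 1) * (k - 1) ≤ (k - 1) * c := Nat.mul_le_mul_left _ (by omega)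
    have : k * (k - 1) = (k - 1) * (k - 1) + (k - 1) := by
      rw [← Nat.succ_mul, show (k - 1).succ = k by omega]
    omega
  rw [hbal]
  by_cases hv1 : c = 1 ∧ d = 0
  · obtain ⟨rfl, rfl⟩ := hv1
    have hone : balInc k (k * 1 + 0) = 1 := by rw [balInc_mul_add (by omega)]; simp
    have := balInc_lt_balInc_add_pred hk (show k - 1 ≤ b - 1 by omega)
    rw [show b - 1 + (k - 1) = s - 1 by omega] at this
    omega
  have hvk : k ≤ s - b := by
    rcases Nat.lt_or_ge c 2 with hc1 | hc2
    · obtain rfl : c = 1 := by omega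
      omega
    · have : (k - 1) * 2 ≤ (k - 1) * c := Nat.mul_le_mul_left _ hc2
      omega
  by_cases hcb : c + k ≤ b - 1
  · exact balInc_add_balInc_le (by omega) (by omega) (by omega)
  · calc balInc k (b - 1) + balInc k (k * c + d) ≤ balInc k (k * c + d + 1) :=
          balInc_add_balInc_mul_add_le hc hck (by omega) (by omega)
      _ ≤ balInc k (s - 1) := balInc_monotone k (by omega)

theorem sum_balProd_add_prod_le_balProd {k s : ℕ} (hk : 3 ≤ k) (hs : s ≤ k * (k - 1))
    (x : Fin k → ℕ) (hx : ∑ i, x i = s) :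
    ∑ i, balProd k (x i) + ∏ i, x i ≤ balProd k s := by
  induction s using Nat.strong_induction_on generalizing x with
  | _ s ih =>
  by_cases hsmall : ∀ i, x i < k
  · rw [sum_eq_zero (fun i _ => balProd_eq_zero_of_lt (hsmall i)), zero_add, ← hx]
    simpa using prod_le_balProd univ x
  push Not at hsmall
  obtain ⟨j, hj⟩ := hsmall
  have hj' : j ∈ univ := mem_univ j
  set x' := Function.update x j (x j - 1)
  have hx'j : x' j = x j - 1 := Function.update_self _ _ _
  have hrest : ∀ i ∈ univ.erase j, x' i = x i :=
    fun i hi => Function.update_of_ne (ne_of_mem_erase hi) _ _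
  set R := ∏ i ∈ univ.erase j, x i
  have hxj : x j + (univ.erase j).sum x = s := by rw [add_sum_erase _ _ hj', hx]
  have hR : R ≤ balProd (k - 1) (s - x j) := by
    have := prod_le_balProd (univ.erase j) x
    rwa [card_erase_of_mem hj', card_univ, Fintype.card_fin,
      show (univ.erase j).sum x = s - x j by omega] at this
  have hsum' : ∑ i, x' i = s - 1 := by
    rw [← add_sum_erase _ _ hj', sum_congr rfl hrest, hx'j]
    omega
  have hbal : ∑ i, balProd k (x i) = balProd k (x j - 1) + balInc k (x j - 1) +
      ∑ i ∈ univ.erase j, balProd k (x i) := by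
    rw [← add_sum_erase _ _ hj', ← balProd_succ (by omega), Nat.sub_add_cancel (by omega)]
  have hbal' : ∑ i, balProd k (x' i) =
      balProd k (x j - 1) + ∑ i ∈ univ.erase j, balProd k (x i) := by
    rw [← add_sum_erase _ _ hj', sum_congr rfl (fun i hi => by rw [hrest i hi]), hx'j]
  have hprod : ∏ i, x i = (x j - 1) * R + R := by
    rw [← mul_prod_erase _ _ hj', ← Nat.succ_mul, Nat.succ_eq_add_one,
      Nat.sub_add_cancel (by omega)]
  have hprod' : ∏ i, x' i = (x j - 1) * R := by
    rw [← mul_prod_erase _ _ hj', prod_congr rfl hrest, hx'j]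
  have hstep := balInc_pred_add_balProd_le hk hj
    (by rw [← hxj]; exact Nat.le_add_right _ _) hs
  have hih := ih (s - 1) (by omega) (by omega) x' hsum'
  have hs1 : balProd k s = balProd k (s - 1) + balInc k (s - 1) := by
    rw [← balProd_succ (by omega), Nat.sub_add_cancel (by omega)]
  omega

def gCandidates (k s : ℕ) : Set ℕ :=
  {m | ∃ q : Fin k → ℕ, ∃ _ : ∀ i, q i < s,
    (∑ i, q i) = s ∧ m = (∑ i, g k (q i)) + ∏ i, q i}

theorem g_eq_s9 (k s : ℕ) : g k s = if s < k then 0 else sSup (gCandidates k s) := by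
  unfold g Nat.strongRecOn
  rw [WellFounded.fix_eq]
  rfl

theorem g_eq_balProd {k s : ℕ} (hk : 3 ≤ k) (hs : s ≤ k * (k - 1)) : g k s = balProd k s := by
  induction s using Nat.strong_induction_on with
  | _ s ih =>
  rw [g_eq_s9]
  split_ifs with hsk
  · exact (balProd_eq_zero_of_lt hsk).symm
  have hub : balProd k s ∈ upperBounds (gCandidates k s) := by
    rintro _ ⟨q, hq, hsum, rfl⟩
    rw [sum_congr rfl (fun i _ => ih (q i) (hq i) (by have := hq i; omega))]
    exact sum_balProd_add_prod_le_balProd hk hs q hsum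
  obtain ⟨q, hsum, hq, hprod⟩ := exists_sum_eq_prod_eq_balProd (show 0 < k by omega) s
  have hqs : ∀ i, q i < s := by
    have : s / k * 3 ≤ s := (Nat.mul_le_mul_left _ hk).trans (Nat.div_mul_le_self s k)
    exact fun i => (hq i).trans_lt (by omega)
  refine le_antisymm (csSup_le' hub) (le_csSup ⟨_, hub⟩ ⟨q, hqs, hsum, rfl⟩ |>.trans' ?_)
  rw [hprod]
  exact Nat.le_add_left _ _

theorem p_le_balProd (m j : ℕ) : p m j ≤ balProd j m := by
  refine csSup_le' ?_
  rintro _ ⟨q, hsum, -, rfl⟩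
  simpa [hsum] using prod_le_balProd univ q

theorem g_induction_step (k n : ℕ) (hk : 3 ≤ k) (hn : k + 1 ≤ n) (hn' : n ≤ k * (k - 1)) :
    g k (n - 1) + 1 + p (n - k) (k - 1) ≤ g k n := by
  have hone : balInc k (k - 1) = 1 := by
    simpa using balInc_mul_add (k := k) (a := 0) (r := k - 1) (by omega)
  have hstep := balInc_pred_add_balProd_le hk le_rfl (by omega) hn'
  rw [hone] at hstep
  calc g k (n - 1) + 1 + p (n - k) (k - 1) ≤ balProd k (n - 1) + balInc k (n - 1) := by
        have := p_le_balProd (n - k) (k - 1)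
        rw [g_eq_balProd hk (by omega)]
        omega
    _ = g k n := by
        rw [← balProd_succ (by omega), Nat.sub_add_cancel (by omega), g_eq_balProd hk hn']
end

section
/- For integers $k \ge 4$ and $n > k(k-1)$, $g_k(n) \ge (n^k - k^3 n^{k-2})/(k^k - k)$. -/
set_option maxHeartbeats 2000000

lemma g_ge (k n : ℕ) (hkn : k ≤ n) (q : Fin k → ℕ) (hq : ∀ i, q i < n)
    (hsum : (∑ i, q i) = n) : (∑ i, g k (q i)) + ∏ i, q i ≤ g k n := by
  rw [g_eq, if_neg (by omega)]
  apply le_csSup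
  · apply Set.Finite.bddAbove
    apply Set.Finite.subset (Set.Finite.image
      (f := fun q : Fin k → ℕ => (∑ i, g k (q i)) + ∏ i, q i)
      (Set.Finite.pi (fun _ : Fin k => Set.finite_Iic n)))
    rintro m ⟨q', h', hs', rfl⟩
    exact ⟨q', fun i _ => le_of_lt (h' i), rfl⟩
  · exact ⟨q, hq, hsum, rfl⟩

section partition
variable (k q r : ℕ)

def part (i : Fin k) : ℕ := q + (if (i : ℕ) < r then 1 else 0)

lemma card_filter_lt (h : r ≤ k) :
    (Finset.filter (fun i : Fin k => (i : ℕ) < r) Finset.univ).card = r := by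
  have hfilter : (Finset.range k).filter (fun j => j < r) = Finset.range r := by
    ext j; simp only [Finset.mem_filter, Finset.mem_range]; omega
  rw [Finset.card_filter, Fin.sum_univ_eq_sum_range (fun j => if j < r then (1:ℕ) else 0),
    Finset.sum_ite, Finset.sum_const, Finset.sum_const, hfilter, Finset.card_range]
  simp

lemma sum_part (h : r ≤ k) : (∑ i, part k q r i) = k * q + r := by
  unfold part
  rw [Finset.sum_add_distrib, Finset.sum_const, Finset.card_univ, Fintype.card_fin,
    show (∑ x : Fin k, if (x:ℕ) < r then 1 else 0)
      = (Finset.filter (fun i : Fin k => (i:ℕ) < r) Finset.univ).card from (Finset.card_filter _ _).symm,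
    card_filter_lt k r h]
  simp [mul_comm]

lemma prod_part (h : r ≤ k) : (∏ i, part k q r i) = (q + 1) ^ r * q ^ (k - r) := by
  unfold part
  have h2 : ∀ i : Fin k, q + (if (i : ℕ) < r then 1 else 0)
      = if (i : ℕ) < r then q + 1 else q := by intro i; split <;> rfl
  rw [Finset.prod_congr rfl (fun i _ => h2 i), Finset.prod_ite, Finset.prod_const,
    Finset.prod_const, card_filter_lt k r h]
  congr 2
  have h3 := Finset.card_filter_add_card_filter_not
    (s := (Finset.univ : Finset (Fin k))) (p := fun i : Fin k => (i : ℕ) < r)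
  rw [Finset.card_univ, Fintype.card_fin, card_filter_lt k r h] at h3
  omega

end partition

-- k^m ≤ 3 (k-1)^m  for m ≤ k-1
lemma N3 (k m : ℕ) (hk : 2 ≤ k) (hm : m + 1 ≤ k) : (k : ℝ) ^ m ≤ 3 * ((k : ℝ) - 1) ^ m := by
  have hk1 : (1 : ℝ) ≤ (k : ℝ) - 1 := by
    have : (2:ℝ) ≤ k := by exact_mod_cast hk
    linarith
  have hx : (0:ℝ) < (k:ℝ) - 1 := by linarith
  have hkk : (k:ℝ) = ((k:ℝ) - 1) * (1 + 1/((k:ℝ)-1)) := by field_simp; ring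
  have h1 : (1 + 1/((k:ℝ)-1)) ^ m ≤ Real.exp (m * (1/((k:ℝ)-1))) := by
    calc (1 + 1/((k:ℝ)-1)) ^ m ≤ (Real.exp (1/((k:ℝ)-1))) ^ m := by
          apply pow_le_pow_left₀ (by positivity)
          linarith [Real.add_one_le_exp (1/((k:ℝ)-1))]
      _ = Real.exp (m * (1/((k:ℝ)-1))) := by
          rw [← Real.exp_nat_mul]
  have h2 : (m : ℝ) * (1/((k:ℝ)-1)) ≤ 1 := by
    rw [mul_one_div, div_le_one hx]
    have : (m:ℝ) + 1 ≤ k := by exact_mod_cast hm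
    linarith
  have h3 : Real.exp ((m:ℝ) * (1/((k:ℝ)-1))) ≤ Real.exp 1 := Real.exp_le_exp.2 h2
  have h4 : Real.exp 1 ≤ 3 := by linarith [Real.exp_one_lt_d9]
  calc (k:ℝ)^m = ((k:ℝ)-1)^m * (1 + 1/((k:ℝ)-1))^m := by rw [← mul_pow, ← hkk]
    _ ≤ ((k:ℝ)-1)^m * 3 := by
        apply mul_le_mul_of_nonneg_left _ (by positivity)
        calc (1 + 1/((k:ℝ)-1)) ^ m ≤ Real.exp ((m:ℝ) * (1/((k:ℝ)-1))) := h1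
          _ ≤ 3 := le_trans h3 h4
    _ = 3 * ((k:ℝ)-1)^m := by ring

-- termwise product inequality
lemma keyprod (k r m : ℕ) (hr : r + 1 ≤ k) :
    (k-1)^m * Nat.descFactorial (r-1) m ≤ r^m * Nat.descFactorial (k-2) m := by
  rw [Nat.descFactorial_eq_prod_range, Nat.descFactorial_eq_prod_range,
    show (k-1)^m = ∏ _i ∈ Finset.range m, (k-1) by rw [Finset.prod_const, Finset.card_range],
    show r^m = ∏ _i ∈ Finset.range m, r by rw [Finset.prod_const, Finset.card_range],
    ← Finset.prod_mul_distrib, ← Finset.prod_mul_distrib]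
  apply Finset.prod_le_prod'
  intro i _
  -- (k-1) * (r-1-i) ≤ r * (k-2-i)
  rcases Nat.le_total r (i+1) with h | h
  · have : r - 1 - i = 0 := by omega
    simp [this]
  · -- i + 1 ≤ r
    have e1 : (k-1) = r + (k-1-r) := by omega
    have e2 : r - 1 - i + (k-1-r) = k - 2 - i := by omega
    calc (k-1) * (r-1-i) = r * (r-1-i) + (k-1-r) * (r-1-i) := by
          rw [← Nat.add_mul, ← e1]
      _ ≤ r * (r-1-i) + (k-1-r) * r := by
          exact Nat.add_le_add_left (Nat.mul_le_mul_left _ (by omega)) _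
      _ = r * ((r-1-i) + (k-1-r)) := by ring
      _ = r * (k-2-i) := by rw [e2]

-- S' : j * k^j * C(r,j) ≤ 3 * k * r^j * C(k-2, j-1),  2 ≤ j ≤ r ≤ k-1
lemma sprime (k r j : ℕ) (hk : 4 ≤ k) (hj : 2 ≤ j) (hjr : j ≤ r) (hr : r + 1 ≤ k) :
    (j:ℝ) * (k:ℝ)^j * (r.choose j) ≤ 3 * k * (r:ℝ)^j * ((k-2).choose (j-1)) := by
  have hfact : (0:ℝ) < (Nat.factorial (j-1)) := by positivity
  rw [← mul_le_mul_iff_of_pos_right hfact]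
  have hj1 : j = (j-1) + 1 := by omega
  have hr1 : r = (r-1) + 1 := by omega
  have e1 : ((j:ℝ)) * (Nat.factorial (j-1)) = (Nat.factorial j) := by
    rw [hj1]; push_cast [Nat.factorial_succ]; ring
  have e2 : (Nat.descFactorial r j : ℝ) = (Nat.factorial j : ℝ) * (r.choose j) := by
    exact_mod_cast Nat.descFactorial_eq_factorial_mul_choose r j
  have e3 : (Nat.descFactorial (k-2) (j-1) : ℝ) = (Nat.factorial (j-1) : ℝ) * ((k-2).choose (j-1)) := by
    exact_mod_cast Nat.descFactorial_eq_factorial_mul_choose (k-2) (j-1)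
  have e4 : Nat.descFactorial r j = r * Nat.descFactorial (r-1) (j-1) := by
    conv_lhs => rw [hr1, hj1]
    rw [Nat.succ_descFactorial_succ]
    congr 1
    omega
  -- goal: j * k^j * C(r,j) * (j-1)! ≤ 3*k*r^j*C(k-2,j-1) * (j-1)!
  have main : (k:ℝ)^j * (Nat.descFactorial r j) ≤ 3 * k * (r:ℝ)^j * (Nat.descFactorial (k-2) (j-1)) := by
    have hN3 : (k:ℝ)^(j-1) ≤ 3 * ((k:ℝ)-1)^(j-1) := N3 k (j-1) (by omega) (by omega)
    have hkp : ((k-1:ℕ)^(j-1) * Nat.descFactorial (r-1) (j-1) : ℝ)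
        ≤ ((r:ℕ)^(j-1) * Nat.descFactorial (k-2) (j-1) : ℝ) := by
      exact_mod_cast keyprod k r (j-1) hr
    have hc1 : ((k-1:ℕ):ℝ) = (k:ℝ) - 1 := by
      push_cast [Nat.cast_sub (by omega : 1 ≤ k)]; ring
    push_cast at hkp
    rw [hc1] at hkp
    have hx : (k:ℝ)^j = k * (k:ℝ)^(j-1) := by
      conv_lhs => rw [hj1]
      rw [pow_succ]; ring
    have hy : (r:ℝ)^j = r * (r:ℝ)^(j-1) := by
      conv_lhs => rw [hj1]
      rw [pow_succ]; ring
    rw [hx, hy, e4]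
    push_cast
    calc (k:ℝ) * (k:ℝ)^(j-1) * ((r:ℝ) * (Nat.descFactorial (r-1) (j-1) : ℕ))
        = (k * r) * ((k:ℝ)^(j-1) * (Nat.descFactorial (r-1) (j-1):ℕ)) := by ring
      _ ≤ (k * r) * ((3 * ((k:ℝ)-1)^(j-1)) * (Nat.descFactorial (r-1) (j-1):ℕ)) := by
          apply mul_le_mul_of_nonneg_left _ (by positivity)
          apply mul_le_mul_of_nonneg_right hN3 (by positivity)
      _ = 3 * (k * r) * (((k:ℝ)-1)^(j-1) * (Nat.descFactorial (r-1) (j-1):ℕ)) := by ring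
      _ ≤ 3 * (k * r) * ((r:ℝ)^(j-1) * (Nat.descFactorial (k-2) (j-1):ℕ)) := by
          apply mul_le_mul_of_nonneg_left hkp (by positivity)
      _ = 3 * (k:ℝ) * ((r:ℝ) * (r:ℝ)^(j-1)) * (Nat.descFactorial (k-2) (j-1):ℕ) := by ring
  calc (j:ℝ) * (k:ℝ)^j * (r.choose j) * (Nat.factorial (j-1))
      = (k:ℝ)^j * ((j:ℝ) * (Nat.factorial (j-1))) * (r.choose j) := by ring
    _ = (k:ℝ)^j * (Nat.descFactorial r j) := by rw [e1, e2]; ring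
    _ ≤ 3 * k * (r:ℝ)^j * (Nat.descFactorial (k-2) (j-1)) := main
    _ = 3 * k * (r:ℝ)^j * ((k-2).choose (j-1)) * (Nat.factorial (j-1)) := by rw [e3]; ring

-- identity: jj*(jj-1)*C(k,jj) = k*(k-1)*C(k-2,jj-2), for 2 ≤ jj ≤ k
lemma choose_id (k jj : ℕ) (h2 : 2 ≤ jj) (hk : 2 ≤ k) :
    jj * (jj - 1) * k.choose jj = k * (k - 1) * (k-2).choose (jj-2) := by
  obtain ⟨j, rfl⟩ : ∃ j, jj = j + 2 := ⟨jj - 2, by omega⟩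
  obtain ⟨m, rfl⟩ : ∃ m, k = m + 2 := ⟨k - 2, by omega⟩
  have h1 := Nat.add_one_mul_choose_eq (m+1) (j+1)
  have h2 := Nat.add_one_mul_choose_eq m j
  -- (m+2) * C(m+1, j+1) = C(m+2, j+2) * (j+2)
  -- (m+1) * C(m, j) = C(m+1, j+1) * (j+1)
  show (j+2) * (j+1) * (m+2).choose (j+2) = (m+2) * (m+1) * m.choose j
  calc (j+2) * (j+1) * (m+2).choose (j+2) = (j+1) * ((m+2).choose (j+2) * (j+2)) := by ring
    _ = (j+1) * ((m+1+1) * (m+1).choose (j+1)) := by rw [← h1]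
    _ = (m+2) * ((m+1).choose (j+1) * (j+1)) := by ring
    _ = (m+2) * ((m+1) * m.choose j) := by rw [← h2]
    _ = (m+2) * (m+1) * m.choose j := by ring

lemma direct (k jj r : ℕ) (h2 : 2 ≤ jj) (hjk : jj ≤ k) (hr : r < jj) :
    k.choose jj * r ≤ k * (k - r) * (k-2).choose (jj-2) := by
  have hkr : jj * (k - r) ≥ k := by
    have h5 : k - r ≥ k - jj + 1 := by omega
    calc k ≤ jj * (k - jj + 1) := by
          have : jj * (k - jj + 1) = jj * (k - jj) + jj := by ring
          rw [this]
          have : k - jj ≤ jj * (k - jj) := Nat.le_mul_of_pos_left _ (by omega)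
          omega
      _ ≤ jj * (k - r) := Nat.mul_le_mul_left _ h5
  have key : (k - 1) * r ≤ jj * (jj - 1) * (k - r) := by
    calc (k-1) * r ≤ (k-1) * (jj-1) := Nat.mul_le_mul_left _ (by omega)
      _ ≤ (jj * (k - r)) * (jj - 1) := Nat.mul_le_mul_right _ (by omega)
      _ = jj * (jj - 1) * (k - r) := by ring
  have hpos : 0 < jj * (jj - 1) := by
    have : 1 ≤ jj - 1 := by omega
    exact Nat.mul_pos (by omega) this
  refine Nat.le_of_mul_le_mul_left ?_ hpos
  calc jj * (jj-1) * (k.choose jj * r) = (jj * (jj-1) * k.choose jj) * r := by ring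
      _ = (k * (k-1) * (k-2).choose (jj-2)) * r := by rw [choose_id k jj h2 (by omega)]
      _ = (k * (k-2).choose (jj-2)) * ((k-1) * r) := by ring
      _ ≤ (k * (k-2).choose (jj-2)) * (jj * (jj-1) * (k - r)) := Nat.mul_le_mul_left _ key
      _ = jj * (jj-1) * (k * (k - r) * (k-2).choose (jj-2)) := by ring

lemma diamond (k r : ℕ) (hk : 4 ≤ k) (hr : r + 1 ≤ k) :
    ∀ j, 2 ≤ j → j ≤ k →
      2 * ((k.choose j : ℝ) * (r:ℝ)^j - (r.choose j : ℝ) * (k:ℝ)^j)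
        ≤ 3 * k * ((k:ℝ) - r) * ((k-2).choose (j-2) : ℝ) * (r:ℝ)^(j-1) := by
  have hkr : (0:ℝ) ≤ (k:ℝ) - r := by
    have : (r:ℝ) + 1 ≤ k := by exact_mod_cast hr
    linarith
  -- the "direct" real consequence, for r < j ≤ k, 2 ≤ j
  have hdirect : ∀ j, 2 ≤ j → j ≤ k → r < j →
      2 * ((k.choose j : ℝ) * (r:ℝ)^j - (r.choose j : ℝ) * (k:ℝ)^j)
        ≤ 3 * k * ((k:ℝ) - r) * ((k-2).choose (j-2) : ℝ) * (r:ℝ)^(j-1) := by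
    intro j hj2 hjk hrj
    rw [Nat.choose_eq_zero_of_lt hrj]
    have hd : ((k.choose j * r : ℕ) : ℝ) ≤ ((k * (k - r) * (k-2).choose (j-2) : ℕ) : ℝ) := by
      exact_mod_cast direct k j r hj2 hjk hrj
    push_cast [Nat.cast_sub (by omega : r ≤ k)] at hd
    have hxy : (r:ℝ)^j = (r:ℝ)^(j-1) * r := by
      conv_lhs => rw [show j = (j-1)+1 by omega]
      rw [pow_succ]
    have hp : (0:ℝ) ≤ (r:ℝ)^(j-1) := by positivity
    calc 2 * ((k.choose j : ℝ) * (r:ℝ)^j - (0:ℕ) * (k:ℝ)^j)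
        = 2 * (((k.choose j : ℝ) * r) * (r:ℝ)^(j-1)) := by rw [hxy]; push_cast; ring
      _ ≤ 2 * ((k * ((k:ℝ) - r) * ((k-2).choose (j-2) : ℝ)) * (r:ℝ)^(j-1)) := by
          apply mul_le_mul_of_nonneg_left _ (by norm_num)
          exact mul_le_mul_of_nonneg_right hd hp
      _ ≤ 3 * k * ((k:ℝ) - r) * ((k-2).choose (j-2) : ℝ) * (r:ℝ)^(j-1) := by
          have : (0:ℝ) ≤ (k * ((k:ℝ) - r) * ((k-2).choose (j-2) : ℝ)) * (r:ℝ)^(j-1) := by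
            have : (0:ℝ) ≤ (k:ℝ) := by positivity
            positivity
          nlinarith [this]
  intro j hj2
  induction j, hj2 using Nat.le_induction with
  | base =>
    intro _
    rcases Nat.eq_zero_or_pos r with rfl | hr1
    · simp
    · have c2k : 2 * (k.choose 2 : ℝ) = (k:ℝ) * ((k:ℝ) - 1) := by
        have h0 : Nat.descFactorial k 2 = 2 * k.choose 2 := by
          rw [Nat.descFactorial_eq_factorial_mul_choose]; norm_num [Nat.factorial]
        have h1 : Nat.descFactorial k 2 = (k - 1) * k := by
          rw [Nat.descFactorial_succ, Nat.descFactorial_one]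
        have : ((2 * k.choose 2 : ℕ) : ℝ) = (((k-1) * k : ℕ) : ℝ) := by
          rw [← h0, h1]
        push_cast [Nat.cast_sub (by omega : 1 ≤ k)] at this
        linarith [this]
      have c2r : 2 * (r.choose 2 : ℝ) = (r:ℝ) * ((r:ℝ) - 1) := by
        have h0 : Nat.descFactorial r 2 = 2 * r.choose 2 := by
          rw [Nat.descFactorial_eq_factorial_mul_choose]; norm_num [Nat.factorial]
        have h1 : Nat.descFactorial r 2 = (r - 1) * r := by
          rw [Nat.descFactorial_succ, Nat.descFactorial_one]
        have : ((2 * r.choose 2 : ℕ) : ℝ) = (((r-1) * r : ℕ) : ℝ) := by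
          rw [← h0, h1]
        push_cast [Nat.cast_sub (by omega : 1 ≤ r)] at this
        linarith [this]
      simp only [show (2:ℕ) - 2 = 0 from rfl, Nat.choose_zero_right, Nat.cast_one,
        show (2:ℕ) - 1 = 1 from rfl, pow_one]
      have hk0 : (0:ℝ) ≤ (k:ℝ) := by positivity
      have hr0 : (0:ℝ) ≤ (r:ℝ) := by positivity
      nlinarith [mul_nonneg (mul_nonneg hk0 hr0) hkr, c2k, c2r]
  | succ j hj ih =>
    intro hjk1
    rcases le_or_gt r j with hrj | hjr
    · exact hdirect (j+1) (by omega) hjk1 (by omega)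
    · -- j < r, so j ≤ k-2; use induction hypothesis
      have hjk : j ≤ k := by omega
      have ihb := ih hjk
      have hsp := sprime k r j hk hj (by omega) hr
      obtain ⟨m, rfl⟩ : ∃ m, j = m + 2 := ⟨j - 2, by omega⟩
      have hjlt : (m+2) < k := by omega
      have e1 : ((k.choose (m+3) : ℕ) : ℝ) * ((m:ℝ)+3) = (k.choose (m+2) : ℝ) * ((k:ℝ) - (m+2)) := by
        have := Nat.choose_succ_right_eq k (m+2)
        have hc : ((k.choose (m+3) * (m+3) : ℕ) : ℝ) = ((k.choose (m+2) * (k - (m+2)) : ℕ) : ℝ) := by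
          exact_mod_cast this
        push_cast [Nat.cast_sub (by omega : m+2 ≤ k)] at hc
        linarith [hc]
      have e2 : ((r.choose (m+3) : ℕ) : ℝ) * ((m:ℝ)+3) = (r.choose (m+2) : ℝ) * ((r:ℝ) - (m+2)) := by
        have := Nat.choose_succ_right_eq r (m+2)
        have hc : ((r.choose (m+3) * (m+3) : ℕ) : ℝ) = ((r.choose (m+2) * (r - (m+2)) : ℕ) : ℝ) := by
          exact_mod_cast this
        push_cast [Nat.cast_sub (by omega : m+2 ≤ r)] at hc
        linarith [hc]
      have e3 : ((k-2).choose (m+1) : ℝ) * ((m:ℝ)+1) = ((k-2).choose m : ℝ) * ((k:ℝ) - (m+2)) := by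
        have := Nat.choose_succ_right_eq (k-2) m
        have hc : (((k-2).choose (m+1) * (m+1) : ℕ) : ℝ) = (((k-2).choose m * ((k-2) - m) : ℕ) : ℝ) := by
          exact_mod_cast this
        push_cast [Nat.cast_sub (by omega : m ≤ k - 2), Nat.cast_sub (by omega : 2 ≤ k)] at hc
        have : ((k:ℝ) - 2 - m) = (k:ℝ) - (m+2) := by ring
        rw [this] at hc
        linarith [hc]
      -- simplify index arithmetic in goal and hypotheses
      simp only [show m+3-2 = m+1 from rfl, show m+3-1 = m+2 from rfl,
        show m+2-2 = m from rfl, show m+2-1 = m+1 from rfl] at ihb hsp ⊢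
      have hkj : (0:ℝ) ≤ ((k:ℝ) - (m+2)) := by
        have : ((m:ℝ)+2) + 1 ≤ k := by exact_mod_cast hjk1
        linarith
      have hrnn : (0:ℝ) ≤ (r:ℝ) := by positivity
      have h1 : ((k:ℝ) - (m+2)) * r * (2 * ((k.choose (m+2) : ℝ) * (r:ℝ)^(m+2) - (r.choose (m+2) : ℝ) * (k:ℝ)^(m+2)))
          ≤ ((k:ℝ) - (m+2)) * r * (3 * k * ((k:ℝ) - r) * ((k-2).choose m : ℝ) * (r:ℝ)^(m+1)) :=
        mul_le_mul_of_nonneg_left ihb (mul_nonneg hkj hrnn)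
      have h2 : 2 * ((k:ℝ) - r) * (((m:ℝ)+2) * (k:ℝ)^(m+2) * (r.choose (m+2) : ℝ))
          ≤ 2 * ((k:ℝ) - r) * (3 * k * (r:ℝ)^(m+2) * ((k-2).choose (m+1) : ℝ)) := by
        apply mul_le_mul_of_nonneg_left _ (by linarith)
        exact_mod_cast hsp
      have hm3 : (0:ℝ) < (m:ℝ) + 3 := by positivity
      rw [← mul_le_mul_iff_of_pos_left hm3]
      calc ((m:ℝ)+3) * (2 * ((k.choose (m+3) : ℝ) * (r:ℝ)^(m+3) - (r.choose (m+3) : ℝ) * (k:ℝ)^(m+3)))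
          = ((k:ℝ) - (m+2)) * r * (2 * ((k.choose (m+2) : ℝ) * (r:ℝ)^(m+2) - (r.choose (m+2) : ℝ) * (k:ℝ)^(m+2)))
            + 2 * ((k:ℝ) - r) * (((m:ℝ)+2) * (k:ℝ)^(m+2) * (r.choose (m+2) : ℝ)) := by
            linear_combination (2 * (r:ℝ)^(m+3)) * e1 - (2 * (k:ℝ)^(m+3)) * e2
        _ ≤ ((k:ℝ) - (m+2)) * r * (3 * k * ((k:ℝ) - r) * ((k-2).choose m : ℝ) * (r:ℝ)^(m+1))
            + 2 * ((k:ℝ) - r) * (3 * k * (r:ℝ)^(m+2) * ((k-2).choose (m+1) : ℝ)) := by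
            linarith [h1, h2]
        _ = ((m:ℝ)+3) * (3 * k * ((k:ℝ) - r) * ((k-2).choose (m+1) : ℝ) * (r:ℝ)^(m+2)) := by
            linear_combination (-(3 * (k:ℝ) * ((k:ℝ) - r) * (r:ℝ)^(m+2))) * e3
lemma club (k r : ℕ) (a : ℝ) (ha : 0 ≤ a) (hk : 4 ≤ k) (hr : r + 1 ≤ k) :
    2 * ((a + (r:ℝ))^k - a^(k-r) * (a + (k:ℝ))^r)
      ≤ 3 * k * r * ((k:ℝ) - r) * (a + (r:ℝ))^(k-2) := by
  have exp1 : (a + (r:ℝ))^k = ∑ j ∈ Finset.range (k+1), (r:ℝ)^j * a^(k-j) * (k.choose j) := by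
    rw [add_comm a (r:ℝ), add_pow]
  have exp2 : a^(k-r) * (a + (k:ℝ))^r
      = ∑ j ∈ Finset.range (k+1), (k:ℝ)^j * a^(k-j) * (r.choose j) := by
    calc a^(k-r) * (a + (k:ℝ))^r
        = ∑ j ∈ Finset.range (r+1), (k:ℝ)^j * a^(k-j) * (r.choose j) := by
          rw [add_comm a (k:ℝ), add_pow, Finset.mul_sum]
          apply Finset.sum_congr rfl
          intro j hj
          have hjr : j ≤ r := by
            have := Finset.mem_range.1 hj; omega
          have h2 : (k-r) + (r-j) = k - j := by omega
          calc a^(k-r) * ((k:ℝ)^j * a^(r-j) * (r.choose j))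
              = (k:ℝ)^j * (a^(k-r) * a^(r-j)) * (r.choose j) := by ring
            _ = (k:ℝ)^j * a^(k-j) * (r.choose j) := by rw [← pow_add, h2]
      _ = ∑ j ∈ Finset.range (k+1), (k:ℝ)^j * a^(k-j) * (r.choose j) := by
          apply Finset.sum_subset (Finset.range_subset_range.2 (by omega : r+1 ≤ k+1))
          intro j hj hnj
          have hlt : r < j := by
            have h1 := Finset.mem_range.1 hj
            have h2 : ¬ j < r + 1 := fun hc => hnj (Finset.mem_range.2 hc)
            omega
          simp [Nat.choose_eq_zero_of_lt hlt]
  have key : 2 * ((a + (r:ℝ))^k - a^(k-r) * (a + (k:ℝ))^r)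
      = ∑ j ∈ Finset.range (k+1),
          2 * (((k.choose j : ℝ) * (r:ℝ)^j - (r.choose j : ℝ) * (k:ℝ)^j) * a^(k-j)) := by
    rw [exp1, exp2, ← Finset.sum_sub_distrib, Finset.mul_sum]
    apply Finset.sum_congr rfl
    intro j _
    ring
  rw [key]
  obtain ⟨K, rfl⟩ : ∃ K, k = K + 2 := ⟨k - 2, by omega⟩
  rw [Finset.sum_range_succ' _ (K+2), Finset.sum_range_succ' _ (K+1)]
  have z0 : 2 * ((((K+2).choose 0 : ℝ) * (r:ℝ)^0 - (r.choose 0 : ℝ) * ((K+2:ℕ):ℝ)^0) * a^(K+2-0)) = 0 := by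
    simp
  have z1 : 2 * ((((K+2).choose (0+1) : ℝ) * (r:ℝ)^(0+1) - (r.choose (0+1) : ℝ) * ((K+2:ℕ):ℝ)^(0+1)) * a^(K+2-(0+1))) = 0 := by
    rw [Nat.choose_one_right, Nat.choose_one_right]
    push_cast
    ring
  rw [z0, z1, add_zero, add_zero]
  have hbound : ∀ i ∈ Finset.range (K+1),
      2 * ((((K+2).choose (i+1+1) : ℝ) * (r:ℝ)^(i+1+1) - (r.choose (i+1+1) : ℝ) * ((K+2:ℕ):ℝ)^(i+1+1)) * a^(K+2-(i+1+1)))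
      ≤ 3 * ((K+2:ℕ):ℝ) * (((K+2:ℕ):ℝ) - r) * ((K.choose i):ℝ) * ((r:ℝ)^(i+1) * a^(K-i)) := by
    intro i hi
    have hik : i + 2 ≤ K + 2 := by
      have := Finset.mem_range.1 hi; omega
    have hd := diamond (K+2) r hk hr (i+2) (by omega) hik
    simp only [show (K+2)-2 = K from rfl, show i+2-2 = i from rfl, show i+2-1 = i+1 from rfl] at hd
    have hnn : (0:ℝ) ≤ a^(K-i) := by positivity
    have hd2 := mul_le_mul_of_nonneg_right hd hnn
    have hex : K+2-(i+1+1) = K - i := by omega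
    have he2 : i+1+1 = i+2 := rfl
    rw [hex, he2]
    calc 2 * ((((K+2).choose (i+2) : ℝ) * (r:ℝ)^(i+2) - (r.choose (i+2) : ℝ) * ((K+2:ℕ):ℝ)^(i+2)) * a^(K-i))
        = (2 * (((K+2).choose (i+2) : ℝ) * (r:ℝ)^(i+2) - (r.choose (i+2) : ℝ) * ((K+2:ℕ):ℝ)^(i+2))) * a^(K-i) := by
          ring
      _ ≤ (3 * ((K+2:ℕ):ℝ) * (((K+2:ℕ):ℝ) - r) * ((K.choose i):ℝ) * (r:ℝ)^(i+1)) * a^(K-i) := hd2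
      _ = 3 * ((K+2:ℕ):ℝ) * (((K+2:ℕ):ℝ) - r) * ((K.choose i):ℝ) * ((r:ℝ)^(i+1) * a^(K-i)) := by
          ring
  apply le_trans (Finset.sum_le_sum hbound)
  have expfin : (a + (r:ℝ))^(K+2-2) = ∑ i ∈ Finset.range (K+1), (r:ℝ)^i * a^(K-i) * (K.choose i) := by
    rw [add_comm a (r:ℝ), show K+2-2 = K from rfl, add_pow]
  apply le_of_eq
  rw [expfin, Finset.mul_sum]
  apply Finset.sum_congr rfl
  intro i _
  ring

lemma E0 : ∀ k, 4 ≤ k → 8*k*3^(k-2) ≤ 5*2^(k-2)*k^(k-2) := by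
  intro k hk
  induction k, hk using Nat.le_induction with
  | base => norm_num
  | succ k hk ih =>
    have e : k+1-2 = (k-2)+1 := by omega
    rw [e, pow_succ, pow_succ, pow_succ]
    refine Nat.le_of_mul_le_mul_left ?_ (show 0 < k by omega)
    calc k * (8*(k+1)*(3^(k-2)*3))
        = (3*(k+1)) * (8*k*3^(k-2)) := by ring
      _ ≤ (4*k) * (8*k*3^(k-2)) := Nat.mul_le_mul_right _ (by omega)
      _ ≤ (4*k) * (5*2^(k-2)*k^(k-2)) := Nat.mul_le_mul_left _ ih
      _ ≤ (4*k) * (5*2^(k-2)*(k+1)^(k-2)) := by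
          apply Nat.mul_le_mul_left
          exact Nat.mul_le_mul_left _ (Nat.pow_le_pow_left (by omega) _)
      _ = (20*k) * (2^(k-2)*(k+1)^(k-2)) := by ring
      _ ≤ (10*k*(k+1)) * (2^(k-2)*(k+1)^(k-2)) := by
          apply Nat.mul_le_mul_right
          nlinarith
      _ = k * (5*(2^(k-2)*2)*((k+1)^(k-2)*(k+1))) := by ring

lemma Ebound (k q : ℕ) (hk : 4 ≤ k) (hq : 2 ≤ q) :
    8*(k:ℝ)*((q:ℝ)+1)^(k-2) ≤ 5*((k:ℝ)*(q:ℝ))^(k-2) := by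
  have hq32 : (q:ℝ)+1 ≤ (3/2)*(q:ℝ) := by
    have : (2:ℝ) ≤ q := by exact_mod_cast hq
    linarith
  have h1 : ((q:ℝ)+1)^(k-2) ≤ ((3/2)*(q:ℝ))^(k-2) :=
    pow_le_pow_left₀ (by positivity) hq32 _
  have h2 : 8*(k:ℝ)*(3/2:ℝ)^(k-2) ≤ 5*(k:ℝ)^(k-2) := by
    have h3 : ((8*k*3^(k-2) : ℕ) : ℝ) ≤ ((5*2^(k-2)*k^(k-2) : ℕ) : ℝ) := by
      exact_mod_cast E0 k hk
    push_cast at h3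
    have h4 : (3/2:ℝ)^(k-2) = 3^(k-2)/2^(k-2) := div_pow 3 2 (k-2)
    rw [h4, ← mul_div_assoc, div_le_iff₀ (by positivity : (0:ℝ) < 2^(k-2))]
    linarith [h3]
  calc 8*(k:ℝ)*((q:ℝ)+1)^(k-2) ≤ 8*(k:ℝ)*((3/2)*(q:ℝ))^(k-2) := by
        apply mul_le_mul_of_nonneg_left h1 (by positivity)
    _ = (8*(k:ℝ)*(3/2:ℝ)^(k-2)) * (q:ℝ)^(k-2) := by rw [mul_pow]; ring
    _ ≤ (5*(k:ℝ)^(k-2)) * (q:ℝ)^(k-2) := by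
        apply mul_le_mul_of_nonneg_right h2 (by positivity)
    _ = 5*((k:ℝ)*(q:ℝ))^(k-2) := by rw [mul_pow]; ring

lemma master (k : ℕ) (hk : 4 ≤ k) :
    ∀ n : ℕ, ((n:ℝ)^k - (k:ℝ)^3 * (n:ℝ)^(k-2)) / ((k:ℝ)^k - k) ≤ (g k n : ℝ) := by
  intro n
  induction n using Nat.strong_induction_on with
  | _ n ih =>
  have hkR : (4:ℝ) ≤ (k:ℝ) := by exact_mod_cast hk
  have hden : (0:ℝ) < (k:ℝ)^k - k := by
    have h1 : (k:ℝ)^2 ≤ (k:ℝ)^k := pow_le_pow_right₀ (by linarith) (by omega)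
    nlinarith
  by_cases hsmall : n^2 ≤ k^3
  · -- trivial case
    have e : (n:ℝ)^k = (n:ℝ)^(k-2) * (n:ℝ)^2 := by
      rw [← pow_add]; congr 1; omega
    have h2 : ((n:ℝ))^2 ≤ ((k:ℝ))^3 := by exact_mod_cast hsmall
    have h3 : (0:ℝ) ≤ (n:ℝ)^(k-2) := by positivity
    have hnum : (n:ℝ)^k - (k:ℝ)^3*(n:ℝ)^(k-2) ≤ 0 := by nlinarith
    have hg : (0:ℝ) ≤ (g k n : ℝ) := by positivity
    exact le_trans (div_nonpos_iff.mpr (Or.inr ⟨hnum, le_of_lt hden⟩)) hg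
  · push_neg at hsmall
    have h2k : 2*k < n := by
      by_contra hc
      push_neg at hc
      have h1 : n^2 ≤ (2*k)^2 := Nat.pow_le_pow_left hc 2
      have h2 : (2*k)^2 ≤ k^3 := by
        calc (2*k)^2 = 4*k^2 := by ring
          _ ≤ k*k^2 := Nat.mul_le_mul_right _ hk
          _ = k^3 := by ring
      omega
    set q := n / k with hqdef
    set r := n % k with hrdef
    have hrk : r < k := Nat.mod_lt _ (by omega)
    have hnqr : k * q + r = n := Nat.div_add_mod n k
    have hq2 : 2 ≤ q := (Nat.le_div_iff_mul_le (by omega)).2 (by omega)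
    have hkn : k ≤ n := by omega
    have h4q : 4*q ≤ k*q := Nat.mul_le_mul_right q hk
    have hlt : ∀ i, part k q r i < n := by
      intro i
      have : part k q r i ≤ q + 1 := by unfold part; split <;> omega
      omega
    have hgge := g_ge k n hkn (part k q r) hlt
      (by rw [sum_part k q r (le_of_lt hrk)]; omega)
    set s : Fin k → ℕ := part k q r with hsdef
    set P : ℝ := ∏ i, (s i : ℝ) with hPdef
    set A : ℝ := ∑ i, (s i : ℝ)^k with hAdef
    set B : ℝ := ∑ i, (s i : ℝ)^(k-2) with hBdef
    set D : ℝ := (k:ℝ)^k - k with hDdef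
    have hscast : ∑ i, (s i : ℝ) = (n:ℝ) := by
      rw [← Nat.cast_sum]
      rw [hsdef, sum_part k q r (le_of_lt hrk)]
      exact_mod_cast congrArg (Nat.cast : ℕ → ℝ) hnqr
    have hP : P = ((q:ℝ)+1)^r * (q:ℝ)^(k-r) := by
      rw [hPdef, ← Nat.cast_prod, hsdef, prod_part k q r (le_of_lt hrk)]
      push_cast
      ring
    -- power mean
    have hA : (k:ℝ) * (n:ℝ)^k ≤ (k:ℝ)^k * A := by
      have pm := pow_sum_div_card_le_sum_pow (s := (Finset.univ : Finset (Fin k)))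
        (f := fun i => (s i : ℝ)) (fun i _ => by positivity) (k-1)
      rw [show k-1+1 = k by omega, Finset.card_univ, Fintype.card_fin, hscast] at pm
      rw [div_le_iff₀ (by positivity : (0:ℝ) < (k:ℝ)^(k-1))] at pm
      have hkk : (k:ℝ) * (k:ℝ)^(k-1) = (k:ℝ)^k := by
        rw [← pow_succ']
        congr 1
        omega
      calc (k:ℝ) * (n:ℝ)^k ≤ (k:ℝ) * (A * (k:ℝ)^(k-1)) := by
            apply mul_le_mul_of_nonneg_left pm (by positivity)
        _ = ((k:ℝ) * (k:ℝ)^(k-1)) * A := by ring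
        _ = (k:ℝ)^k * A := by rw [hkk]
    -- B bound
    have hsle : ∀ i, (s i : ℝ) ≤ (q:ℝ)+1 := by
      intro i
      have : s i ≤ q + 1 := by rw [hsdef]; unfold part; split <;> omega
      exact_mod_cast this
    have hB1 : B ≤ (k:ℝ) * ((q:ℝ)+1)^(k-2) := by
      rw [hBdef]
      calc ∑ i, (s i : ℝ)^(k-2) ≤ ∑ _i : Fin k, ((q:ℝ)+1)^(k-2) := by
            apply Finset.sum_le_sum
            intro i _
            exact pow_le_pow_left₀ (by positivity) (hsle i) _
        _ = (k:ℝ) * ((q:ℝ)+1)^(k-2) := by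
            rw [Finset.sum_const, Finset.card_univ, Fintype.card_fin, nsmul_eq_mul]
    have hkqn : (k:ℝ)*(q:ℝ) ≤ (n:ℝ) := by
      have : k*q ≤ n := by omega
      exact_mod_cast this
    have hB5 : 8 * B ≤ 5 * (n:ℝ)^(k-2) := by
      have h1 := Ebound k q hk hq2
      have h2 : ((k:ℝ)*(q:ℝ))^(k-2) ≤ (n:ℝ)^(k-2) :=
        pow_le_pow_left₀ (by positivity) hkqn _
      linarith
    -- club bound
    have hX : (n:ℝ)^k - (k:ℝ)^k * P ≤ (3/8) * (k:ℝ)^3 * (n:ℝ)^(k-2) := by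
      have hc := club k r ((k:ℝ)*(q:ℝ)) (by positivity) hk (by omega)
      have hn_eq : (k:ℝ)*(q:ℝ) + (r:ℝ) = (n:ℝ) := by
        exact_mod_cast congrArg (Nat.cast : ℕ → ℝ) hnqr
      have hprod_eq : ((k:ℝ)*(q:ℝ))^(k-r) * ((k:ℝ)*(q:ℝ) + (k:ℝ))^r = (k:ℝ)^k * P := by
        rw [hP]
        have e1 : (k:ℝ)*(q:ℝ) + (k:ℝ) = (k:ℝ) * ((q:ℝ)+1) := by ring
        rw [e1, mul_pow, mul_pow]
        have e2 : (k:ℝ)^(k-r) * (k:ℝ)^r = (k:ℝ)^k := by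
          rw [← pow_add]
          congr 1
          omega
        calc ((k:ℝ)^(k-r) * (q:ℝ)^(k-r)) * ((k:ℝ)^r * ((q:ℝ)+1)^r)
            = ((k:ℝ)^(k-r) * (k:ℝ)^r) * ((q:ℝ)^(k-r) * ((q:ℝ)+1)^r) := by ring
          _ = (k:ℝ)^k * (((q:ℝ)+1)^r * (q:ℝ)^(k-r)) := by rw [e2]; ring
      rw [hn_eq, hprod_eq] at hc
      have hrr : (0:ℝ) ≤ (r:ℝ) := by positivity
      have hkr0 : (0:ℝ) ≤ (k:ℝ) - r := by
        have : (r:ℝ) + 1 ≤ (k:ℝ) := by exact_mod_cast hrk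
        linarith
      have hquad : 4 * ((r:ℝ) * ((k:ℝ) - r)) ≤ (k:ℝ)^2 := by
        nlinarith [sq_nonneg ((k:ℝ) - 2*(r:ℝ))]
      have hnn : (0:ℝ) ≤ (n:ℝ)^(k-2) := by positivity
      nlinarith [mul_le_mul_of_nonneg_right hquad hnn, mul_le_mul_of_nonneg_right
        (mul_le_mul_of_nonneg_left hquad (by linarith : (0:ℝ) ≤ (3/8)*(k:ℝ))) hnn]
    -- assemble
    have hT : (0:ℝ) < (k:ℝ)^k := by positivity
    have hY : (0:ℝ) ≤ (3/8) * (k:ℝ)^3 * (n:ℝ)^(k-2) := by positivity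
    have f3a : (D) * ((n:ℝ)^k - (k:ℝ)^k * P) ≤ D * ((3/8) * (k:ℝ)^3 * (n:ℝ)^(k-2)) :=
      mul_le_mul_of_nonneg_left hX (le_of_lt hden)
    have f3b : D * ((3/8) * (k:ℝ)^3 * (n:ℝ)^(k-2)) ≤ (k:ℝ)^k * ((3/8) * (k:ℝ)^3 * (n:ℝ)^(k-2)) := by
      apply mul_le_mul_of_nonneg_right _ hY
      rw [hDdef]
      have : (0:ℝ) ≤ (k:ℝ) := by linarith
      linarith
    have f2 : (k:ℝ)^k * ((k:ℝ)^3 * B) ≤ (k:ℝ)^k * ((5/8) * (k:ℝ)^3 * (n:ℝ)^(k-2)) := by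
      have h1 := mul_le_mul_of_nonneg_left hB5
        (show (0:ℝ) ≤ (k:ℝ)^k * (k:ℝ)^3 / 8 by positivity)
      linarith [h1]
    have hmain : (n:ℝ)^k - (k:ℝ)^3 * (n:ℝ)^(k-2) ≤ A - (k:ℝ)^3 * B + P * D := by
      have hGoalT : (k:ℝ)^k * ((n:ℝ)^k - (k:ℝ)^3 * (n:ℝ)^(k-2))
          ≤ (k:ℝ)^k * (A - (k:ℝ)^3 * B + P * D) := by
        rw [hDdef] at f3a f3b ⊢
        linarith [hA, f2, f3a, f3b]
      exact le_of_mul_le_mul_left hGoalT hT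
    -- from ih
    have ihs : ∀ i : Fin k, ((s i : ℝ)^k - (k:ℝ)^3 * (s i : ℝ)^(k-2)) / D ≤ (g k (s i) : ℝ) :=
      fun i => ih (s i) (hlt i)
    have hsum_ih : (A - (k:ℝ)^3 * B) / D ≤ ∑ i, (g k (s i) : ℝ) := by
      rw [hAdef, hBdef, Finset.mul_sum, ← Finset.sum_sub_distrib, Finset.sum_div]
      exact Finset.sum_le_sum (fun i _ => ihs i)
    have hcast : (((∑ i, g k (s i)) + ∏ i, s i : ℕ) : ℝ) ≤ (g k n : ℝ) := by
      exact_mod_cast hgge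
    push_cast at hcast
    calc ((n:ℝ)^k - (k:ℝ)^3 * (n:ℝ)^(k-2)) / D
        ≤ (A - (k:ℝ)^3 * B + P * D) / D := by gcongr
      _ = (A - (k:ℝ)^3 * B) / D + P := by
          rw [add_div, mul_div_cancel_right₀ _ (ne_of_gt hden)]
      _ ≤ (∑ i, (g k (s i) : ℝ)) + P := by linarith [hsum_ih]
      _ ≤ (g k n : ℝ) := by
          rw [hPdef]
          exact hcast

theorem g_lower_bound (k n : ℕ) (hk : 4 ≤ k) (hn : k * (k - 1) < n) :
    ((n : ℝ) ^ k - (k : ℝ) ^ 3 * (n : ℝ) ^ (k - 2)) / ((k : ℝ) ^ k - k) ≤ (g k n : ℝ) :=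
  master k hk n
end

section
/- Let $k \ge 2$ and let $z \in [0, 1/2]$ and nonnegative reals $x_1 \ge x_2 \ge \cdots \ge x_k$ with $\sum_i x_i = 1$ and $x_2 = z$. Then $\sum_{i=1}^k x_i^{k-1} \le (1-z)^{k-1} + z^{k-1}$. -/
/-! Remove the largest coordinate `a = x₁ ≤ 1 - z`. The remaining coordinates are at most `z`
and sum to `1 - a`, so their `(k-1)`-st powers sum to at most `z^(k-2) (1 - a)`. It remains to
check `a^(k-1) + z^(k-2) (1 - a) ≤ (1-z)^(k-1) + z^(k-1)`, a one-variable inequality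
in `a ∈ [0, 1 - z]`, whose worst case is the endpoint `a = 1 - z`. -/

open Finset

theorem Finset.sum_pow_succ_le_mul_sum {ι R : Type*} [CommSemiring R] [PartialOrder R]
    [IsOrderedRing R] (s : Finset ι) (f : ι → R) {c : R} (hf0 : ∀ i ∈ s, 0 ≤ f i)
    (hfc : ∀ i ∈ s, f i ≤ c) (p : ℕ) :
    ∑ i ∈ s, f i ^ (p + 1) ≤ c ^ p * ∑ i ∈ s, f i := by
  rw [mul_sum]
  refine sum_le_sum fun i hi => ?_
  rw [pow_succ]
  exact mul_le_mul_of_nonneg_right (pow_le_pow_left₀ (hf0 i hi) (hfc i hi) p) (hf0 i hi)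

theorem pow_succ_add_mul_sub_le {R : Type*} [CommRing R] [PartialOrder R] [IsOrderedRing R]
    {a b c : R} (ha : 0 ≤ a) (hab : a ≤ b) (hc : 0 ≤ c) (hcb : c ≤ b) (p : ℕ) :
    a ^ (p + 1) + c ^ p * (b - a) ≤ b ^ (p + 1) := by
  calc a ^ (p + 1) + c ^ p * (b - a)
      ≤ b ^ p * a + b ^ p * (b - a) := by
        rw [pow_succ]
        gcongr
    _ = b ^ (p + 1) := by ring

theorem power_sum_max (k : ℕ) (hk : 2 ≤ k) (z : ℝ) (hz0 : 0 ≤ z) (hz : z ≤ 1 / 2)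
    (x : Fin k → ℝ) (hx0 : ∀ i, 0 ≤ x i) (hmono : ∀ i j : Fin k, i ≤ j → x j ≤ x i)
    (hsum : ∑ i, x i = 1) (hx2 : x ⟨1, by omega⟩ = z) :
    ∑ i, (x i) ^ (k - 1) ≤ (1 - z) ^ (k - 1) + z ^ (k - 1) := by
  obtain ⟨p, rfl⟩ : ∃ p, k = p + 2 := ⟨k - 2, by omega⟩
  rw [Fin.sum_univ_succ] at hsum ⊢
  rw [show p + 2 - 1 = p + 1 from rfl]
  have htail_le : ∀ i : Fin (p + 1), x i.succ ≤ z := fun i =>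
    hx2 ▸ hmono _ _ (Fin.le_iff_val_le_val.2 (by simp))
  have hhead_le : x 0 ≤ 1 - z := by
    have : z ≤ ∑ i : Fin (p + 1), x i.succ :=
      hx2 ▸ single_le_sum (f := fun i : Fin (p + 1) => x i.succ) (fun i _ => hx0 _) (mem_univ 0)
    linarith
  have htail := sum_pow_succ_le_mul_sum univ (fun i : Fin (p + 1) => x i.succ)
    (fun i _ => hx0 _) (fun i _ => htail_le i) p
  have hhead := pow_succ_add_mul_sub_le (hx0 0) hhead_le hz0 (by linarith) p
  rw [eq_sub_of_add_eq' hsum] at htail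
  linear_combination htail + hhead
end
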